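/- arXiv:1805.08457 — 8 statements merged into one kernel-verified Lean document; each statement's English description precedes it below -/
import Mathlib

section
/- Suppose that for all t ≥ 0 and all i ≠ j one has ω_i(t) − ω_j(t) − (a_{ij}(t)+a_{ji}(t))·sin r − Σ_{k∉Λ_{ij}(t), k≠i,j} (min(a_{ik}(t),0) + min(a_{jk}(t),0))·sin r − Σ_{k∈Λ_{ij}(t)} min(a_{ik}(t), a_{jk}(t))·sin r < 0. Then A^r is invariant for the time-varying Kuramoto system: every solution θ with |θ_i(0) − θ_j(0)| ≤ r for all i,j satisfies |θ_i(t) − θ_j(t)| ≤ r for all t ≥ 0 and all i,j. -/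
open scoped BigOperators
open Matrix

/-- `θ` is a solution of the time-varying Kuramoto system with intrinsic
frequencies `ω` and coupling coefficients `a`. -/
def IsKuramotoSol (m : ℕ) (ω : Fin m → ℝ → ℝ) (a : Fin m → Fin m → ℝ → ℝ)
    (θ : ℝ → Fin m → ℝ) : Prop :=
  ∀ (i : Fin m) (t : ℝ), 0 ≤ t →
    HasDerivAt (fun s => θ s i)
      (ω i t + ∑ j : Fin m, a i j t * Real.sin (θ t j - θ t i)) t

open Filter Topology Set Finset Real

/-! Let `M t` be the largest phase difference `θ t i - θ t j` over pairs `i ≠ j`. If `M t = r`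
is attained by `(i, j)`, all phases lie in `[θ t j, θ t i]`, so every coupling term of
`θ̇ i - θ̇ j` is bounded by the corresponding term of the hypothesis; on the common neighbours
`Λ_{ij}` this uses `sin (φ + r) - sin φ ≥ sin r` for `φ ∈ [-r, 0]`. Hence `θ̇ i - θ̇ j < 0` at
every maximizing pair, and since the lower right Dini derivative of a finite maximum is at most
the derivative of a function attaining it, `M` can never cross the barrier `r`. -/

section MaxBarrier

variable {ι : Type*} [Fintype ι] [Nonempty ι]

lemma frequently_slope_sup'_lt {g : ι → ℝ → ℝ} {D : ι → ℝ} {x s : ℝ}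
    (hg : ∀ p, HasDerivAt (g p) (D p) x)
    (hs : ∀ p, g p x = univ.sup' univ_nonempty (g · x) → D p < s) :
    ∃ᶠ z in 𝓝[>] x, slope (fun y ↦ univ.sup' univ_nonempty (g · y)) x z < s := by
  set f := fun y ↦ univ.sup' univ_nonempty (g · y)
  obtain ⟨p, hp⟩ : ∃ p, ∃ᶠ z in 𝓝[>] x, g p z = f z := by
    by_contra! h
    obtain ⟨z, hz⟩ := (eventually_all.2 h).exists
    obtain ⟨q, -, hq⟩ := exists_mem_eq_sup' univ_nonempty (g · z)
    exact hz q hq.symm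
  have hpx : g p x = f x :=
    tendsto_nhds_unique_of_frequently_eq
      ((hg p).continuousAt.tendsto.mono_left nhdsWithin_le_nhds)
      ((ContinuousAt.finset_sup'_apply univ_nonempty fun q _ ↦
        (hg q).continuousAt).tendsto.mono_left nhdsWithin_le_nhds) hp
  have hslope : Tendsto (slope (g p) x) (𝓝[>] x) (𝓝 (D p)) :=
    (hasDerivAt_iff_tendsto_slope.1 (hg p)).mono_left (nhdsWithin_mono _ fun z hz ↦ ne_of_gt hz)
  refine (hp.and_eventually (hslope.eventually_lt_const (hs p hpx))).mono fun z ⟨hz, hlt⟩ ↦ ?_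
  simpa only [slope_def_field, hz, hpx] using hlt

theorem image_le_of_deriv_neg_at_max {g D : ι → ℝ → ℝ} {a b r : ℝ}
    (hg : ∀ p, ∀ x ∈ Icc a b, HasDerivAt (g p) (D p x) x)
    (ha : ∀ p, g p a ≤ r)
    (hmax : ∀ x ∈ Ico a b, ∀ p, g p x = r → (∀ q, g q x ≤ r) → D p x < 0) :
    ∀ x ∈ Icc a b, ∀ p, g p x ≤ r := by
  set f := fun y ↦ univ.sup' univ_nonempty (g · y)
  have hargmax : ∀ x, {p | g p x = f x}.toFinset.Nonempty := fun x ↦ by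
    obtain ⟨p, -, hp⟩ := exists_mem_eq_sup' univ_nonempty (g · x)
    exact ⟨p, by simpa using hp.symm⟩
  set f' := fun x ↦ {p | g p x = f x}.toFinset.sup' (hargmax x) (D · x)
  have hf'D : ∀ x p, g p x = f x → D p x ≤ f' x := fun x p hp ↦
    le_sup' (D · x) (by simpa using hp)
  have hle_f : ∀ x p, g p x ≤ f x := fun x p ↦ le_sup' (g · x) (mem_univ p)
  have hf : ∀ x ∈ Icc a b, f x ≤ r := by
    refine image_le_of_liminf_slope_right_lt_deriv_boundary (B' := fun _ ↦ 0)
      (ContinuousOn.finset_sup'_apply univ_nonempty fun p _ y hy ↦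
        (hg p y hy).continuousAt.continuousWithinAt)
      (fun x hx s hs ↦ frequently_slope_sup'_lt (fun p ↦ hg p x (Ico_subset_Icc_self hx))
        fun p hp ↦ (hf'D x p hp).trans_lt hs)
      (sup'_le _ _ fun p _ ↦ ha p) (fun x ↦ hasDerivAt_const x r) fun x hx hfx ↦ ?_
    refine (sup'_lt_iff _).2 fun p hp ↦ hmax x hx p ?_ fun q ↦ hfx ▸ hle_f x q
    exact (by simpa using hp : g p x = f x).trans hfx
  exact fun x hx p ↦ (hle_f x p).trans (hf x hx)

end MaxBarrier

lemma sin_le_sin_add_sub_sin {r φ : ℝ} (hr0 : 0 ≤ r) (hrπ : r ≤ π) (hφr : -r ≤ φ)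
    (hφ0 : φ ≤ 0) : sin r ≤ sin (φ + r) - sin φ := by
  have hdiff : sin (φ + r) - sin φ = 2 * sin (r / 2) * cos (φ + r / 2) := by
    rw [sin_sub_sin]; ring_nf
  have hsin : sin r = 2 * sin (r / 2) * cos (r / 2) := by
    rw [← sin_two_mul]; ring_nf
  have hcos : cos (r / 2) ≤ cos (φ + r / 2) := by
    rw [← cos_abs (φ + r / 2)]
    exact cos_le_cos_of_nonneg_of_le_pi (abs_nonneg _) (by linarith)
      (abs_le.2 ⟨by linarith, by linarith⟩)
  have hs : 0 ≤ sin (r / 2) := sin_nonneg_of_nonneg_of_le_pi (by linarith) (by linarith [pi_pos])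
  rw [hdiff, hsin]
  gcongr

section CouplingTerm

variable {a b r φ : ℝ}

lemma mul_sin_sub_mul_sin_add_le_neg_min_mul (hr0 : 0 ≤ r) (hr : r ≤ π / 2) (hφr : -r ≤ φ)
    (hφ0 : φ ≤ 0) (ha : 0 ≤ a) (hb : 0 ≤ b) :
    a * sin φ - b * sin (φ + r) ≤ -(min a b * sin r) := by
  have hsinφ : sin φ ≤ 0 := sin_nonpos_of_nonpos_of_neg_pi_le hφ0 (by linarith [pi_pos])
  have hsinφr : 0 ≤ sin (φ + r) := sin_nonneg_of_nonneg_of_le_pi (by linarith) (by linarith)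
  have hshift := sin_le_sin_add_sub_sin hr0 (by linarith [pi_pos]) hφr hφ0
  have h1 : a * sin φ ≤ min a b * sin φ := mul_le_mul_of_nonpos_right (min_le_left a b) hsinφ
  have h2 : min a b * sin (φ + r) ≤ b * sin (φ + r) :=
    mul_le_mul_of_nonneg_right (min_le_right a b) hsinφr
  nlinarith [le_min ha hb]

lemma mul_sin_sub_mul_sin_add_le_neg_min_zero_mul (hr : r ≤ π / 2) (hφr : -r ≤ φ)
    (hφ0 : φ ≤ 0) :
    a * sin φ - b * sin (φ + r) ≤ -((min a 0 + min b 0) * sin r) := by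
  have hsinφ : sin φ ≤ 0 := sin_nonpos_of_nonpos_of_neg_pi_le hφ0 (by linarith [pi_pos])
  have hsinφr : 0 ≤ sin (φ + r) := sin_nonneg_of_nonneg_of_le_pi (by linarith) (by linarith)
  have hsinφ' : -sin r ≤ sin φ := by
    rw [← sin_neg]; exact sin_le_sin_of_le_of_le_pi_div_two (by linarith) (by linarith) hφr
  have hsinφr' : sin (φ + r) ≤ sin r :=
    sin_le_sin_of_le_of_le_pi_div_two (by linarith) hr (by linarith)
  rcases le_total a 0 with ha | ha <;> rcases le_total b 0 with hb | hb <;>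
    simp only [min_eq_left, min_eq_right, ha, hb] <;> nlinarith

end CouplingTerm

namespace Kuramoto

variable {m : ℕ} (ω : Fin m → ℝ) (a : Fin m → Fin m → ℝ)

noncomputable def velocity (θ : Fin m → ℝ) (i : Fin m) : ℝ :=
  ω i + ∑ j, a i j * sin (θ j - θ i)

noncomputable def margin (r : ℝ) (i j : Fin m) : ℝ :=
  ω i - ω j - (a i j + a j i) * sin r
    - (∑ k ∈ univ.filter (fun k => ¬(0 < a i k ∧ 0 < a j k) ∧ k ≠ i ∧ k ≠ j),
        (min (a i k) 0 + min (a j k) 0)) * sin r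
    - (∑ k ∈ univ.filter (fun k => 0 < a i k ∧ 0 < a j k), min (a i k) (a j k)) * sin r

variable {ω a}

theorem velocity_lt_velocity_of_margin_neg (hdiag : ∀ k, a k k = 0) {r : ℝ} (hr0 : 0 ≤ r)
    (hr : r ≤ π / 2) {θ : Fin m → ℝ} (hθ : ∀ k l, θ k - θ l ≤ r) {i j : Fin m} (hij : i ≠ j)
    (hθij : θ i - θ j = r) (hmargin : margin ω a r i j < 0) :
    velocity ω a θ i < velocity ω a θ j := by
  set Λ : Fin m → Prop := fun k => 0 < a i k ∧ 0 < a j k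
  set c : Fin m → ℝ := fun k => (if k = i then a j i else 0) + (if k = j then a i j else 0)
    + (if ¬Λ k ∧ k ≠ i ∧ k ≠ j then min (a i k) 0 + min (a j k) 0 else 0)
    + (if Λ k then min (a i k) (a j k) else 0)
  have hc : ∑ k, c k = a j i + a i j
      + ∑ k ∈ univ.filter (fun k => ¬Λ k ∧ k ≠ i ∧ k ≠ j), (min (a i k) 0 + min (a j k) 0)
      + ∑ k ∈ univ.filter Λ, min (a i k) (a j k) := by
    rw [Finset.sum_filter, Finset.sum_filter]
    simp only [c, Finset.sum_add_distrib, Finset.sum_ite_eq', Finset.mem_univ, if_true]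
    rfl
  have hφ : ∀ k, θ k - θ j = (θ k - θ i) + r := fun k => by linarith
  have hterm : ∀ k, a i k * sin (θ k - θ i) - a j k * sin (θ k - θ j) ≤ -(c k * sin r) := by
    intro k
    have hφr : -r ≤ θ k - θ i := by linarith [hθ i k]
    have hφ0 : θ k - θ i ≤ 0 := by linarith [hθ k j]
    rw [hφ k]
    by_cases hki : k = i
    · subst hki
      simp [c, Λ, hdiag, hij]
    by_cases hkj : k = j
    · subst hkj
      have : θ k - θ i = -r := by linarith
      simp [c, Λ, hdiag, hij.symm, this]
    by_cases hΛ : Λ k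
    · simpa [c, hki, hkj, hΛ] using
        mul_sin_sub_mul_sin_add_le_neg_min_mul hr0 hr hφr hφ0 hΛ.1.le hΛ.2.le
    · simpa [c, hki, hkj, hΛ] using
        mul_sin_sub_mul_sin_add_le_neg_min_zero_mul (a := a i k) (b := a j k) hr hφr hφ0
  have hsum := Finset.sum_le_sum fun k (_ : k ∈ Finset.univ) => hterm k
  rw [Finset.sum_sub_distrib, Finset.sum_neg_distrib, ← Finset.sum_mul, hc] at hsum
  unfold velocity
  unfold margin at hmargin
  linarith

end Kuramoto

theorem stmt0_general
    (m : ℕ)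
    (ω : Fin m → ℝ → ℝ) (a : Fin m → Fin m → ℝ → ℝ)
    (hdiag : ∀ i t, a i i t = 0)
    (r : ℝ) (hr0 : 0 ≤ r) (hr1 : r < Real.pi / 2)
    (hcond : ∀ t, 0 ≤ t → ∀ i j : Fin m, i ≠ j →
      ω i t - ω j t - (a i j t + a j i t) * Real.sin r
        - (∑ k ∈ Finset.univ.filter
            (fun k => ¬(0 < a i k t ∧ 0 < a j k t) ∧ k ≠ i ∧ k ≠ j),
            (min (a i k t) 0 + min (a j k t) 0)) * Real.sin r
        - (∑ k ∈ Finset.univ.filter (fun k => 0 < a i k t ∧ 0 < a j k t),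
            min (a i k t) (a j k t)) * Real.sin r < 0) :
    ∀ θ : ℝ → Fin m → ℝ, IsKuramotoSol m ω a θ →
      (∀ i j, |θ 0 i - θ 0 j| ≤ r) →
      ∀ t, 0 ≤ t → ∀ i j, |θ t i - θ t j| ≤ r := by
  intro θ hθ hinit t ht i j
  obtain rfl | hij := eq_or_ne i j
  · simpa using hr0
  -- Over all pairs, the diagonal would attain the maximum when `r = 0`, with derivative `0`.
  have : Nonempty {p : Fin m × Fin m // p.1 ≠ p.2} := ⟨⟨(i, j), hij⟩⟩
  have hbarrier := image_le_of_deriv_neg_at_max (ι := {p : Fin m × Fin m // p.1 ≠ p.2})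
    (a := 0) (b := t) (r := r)
    (g := fun p s ↦ θ s p.1.1 - θ s p.1.2)
    (D := fun p s ↦ Kuramoto.velocity (ω · s) (a · · s) (θ s) p.1.1
      - Kuramoto.velocity (ω · s) (a · · s) (θ s) p.1.2)
    (fun p x hx ↦ (hθ _ x hx.1).sub (hθ _ x hx.1))
    (fun p ↦ le_of_abs_le (hinit _ _))
    fun x hx p hpr hmax ↦ by
      have hθx : ∀ k l, θ x k - θ x l ≤ r := fun k l ↦ by
        obtain rfl | hkl := eq_or_ne k l
        · simpa using hr0
        · exact hmax ⟨(k, l), hkl⟩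
      exact sub_neg.2 <| Kuramoto.velocity_lt_velocity_of_margin_neg (hdiag · x) hr0 hr1.le hθx
        p.2 hpr (hcond x hx.1 _ _ p.2)
  have hdiff := hbarrier t ⟨ht, le_rfl⟩
  exact abs_le.2 ⟨by linarith [hdiff ⟨(j, i), hij.symm⟩], hdiff ⟨(i, j), hij⟩⟩

theorem stmt0
    (m : ℕ) (hm : 2 ≤ m)
    (ω : Fin m → ℝ → ℝ) (a : Fin m → Fin m → ℝ → ℝ)
    (hωc : ∀ i, ContinuousOn (ω i) (Set.Ici 0))
    (hac : ∀ i j, ContinuousOn (a i j) (Set.Ici 0))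
    (hdiag : ∀ i t, a i i t = 0)
    (r : ℝ) (hr0 : 0 ≤ r) (hr1 : r < Real.pi / 2)
    (hcond : ∀ t, 0 ≤ t → ∀ i j : Fin m, i ≠ j →
      ω i t - ω j t - (a i j t + a j i t) * Real.sin r
        - (∑ k ∈ Finset.univ.filter
            (fun k => ¬(0 < a i k t ∧ 0 < a j k t) ∧ k ≠ i ∧ k ≠ j),
            (min (a i k t) 0 + min (a j k t) 0)) * Real.sin r
        - (∑ k ∈ Finset.univ.filter (fun k => 0 < a i k t ∧ 0 < a j k t),
            min (a i k t) (a j k t)) * Real.sin r < 0) :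
    ∀ θ : ℝ → Fin m → ℝ, IsKuramotoSol m ω a θ →
      (∀ i j, |θ 0 i - θ 0 j| ≤ r) →
      ∀ t, 0 ≤ t → ∀ i j, |θ t i - θ t j| ≤ r :=
  stmt0_general m ω a hdiag r hr0 hr1 hcond
end

section
/- Let Δω = sup_{t≥0} max_{i≠j} |ω_i(t) − ω_j(t)|, μ₀ = inf_{t≥0} min_{i≠j} Σ_{k∈Λ_{ij}(t)} min(a_{ik}(t), a_{jk}(t)), μ₁ = sup_{t≥0} max_{i≠j} Σ_{k∉Λ_{ij}(t), k≠i,j} (−min(a_{ik}(t),0) − min(a_{jk}(t),0)), and μ₂ = inf_{t≥0} min_{i≠j} (a_{ij}(t) + a_{ji}(t)). If Δω < (μ₀ + μ₂ − μ₁)·sin r, then A^r is invariant for the time-varying Kuramoto system. -/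
open scoped BigOperators
open Matrix

/-- The region `A^r` is invariant for the system. -/
def InvariantAr (m : ℕ) (ω : Fin m → ℝ → ℝ) (a : Fin m → Fin m → ℝ → ℝ)
    (r : ℝ) : Prop :=
  ∀ θ : ℝ → Fin m → ℝ, IsKuramotoSol m ω a θ →
    (∀ i j, |θ 0 i - θ 0 j| ≤ r) →
    ∀ t, 0 ≤ t → ∀ i j, |θ t i - θ t j| ≤ r

/-!
The set of times at which all phase gaps are at most `r` is closed, so by real induction it is
enough that it extends to the right of each of its points. A gap below `r` stays below by
continuity. At an extremal pair, `θ_i - θ_j = r`, every phase lies between `θ_j` and `θ_i`, and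
the coupling terms `a_ik sin (θ_i - θ_k) + a_jk sin (θ_k - θ_j)` are bounded below by
`min (a_ik, a_jk) sin r` for `k ∈ Λ_ij` (subadditivity of `sin` on `[0, π]`), by
`(min (a_ik, 0) + min (a_jk, 0)) sin r` for the other `k ≠ i, j`, while `k = j` and `k = i`
contribute `(a_ij + a_ji) sin r`. So the gap has negative derivative and decreases.
-/

open Real Filter Topology Finset Set

theorem eventually_nhdsGT_lt_of_hasDerivAt_neg {f : ℝ → ℝ} {d t : ℝ} (hf : HasDerivAt f d t)
    (hd : d < 0) : ∀ᶠ s in 𝓝[>] t, f s < f t := by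
  filter_upwards [hf.hasDerivWithinAt.limsup_slope_le' (lt_irrefl t) hd,
    self_mem_nhdsWithin] with s hslope (hts : t < s)
  rw [slope_def_field, div_neg_iff] at hslope
  rcases hslope with ⟨-, hneg⟩ | ⟨hneg, -⟩ <;> linarith

theorem eventually_nhdsGT_le_of_hasDerivAt {f : ℝ → ℝ} {d t r : ℝ} (hf : HasDerivAt f d t)
    (hle : f t ≤ r) (hd : f t = r → d < 0) : ∀ᶠ s in 𝓝[>] t, f s ≤ r := by
  rcases hle.lt_or_eq with hlt | heq
  · exact (hf.continuousAt.eventually_lt continuousAt_const hlt).filter_mono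
      nhdsWithin_le_nhds |>.mono fun _ => le_of_lt
  · exact (eventually_nhdsGT_lt_of_hasDerivAt_neg hf (hd heq)).mono fun _ h => heq ▸ h.le

theorem min_mul_add_le_mul_add_mul {a b s t : ℝ} (hs : 0 ≤ s) (ht : 0 ≤ t) :
    min a b * (s + t) ≤ a * s + b * t := by
  nlinarith [min_le_left a b, min_le_right a b]

theorem min_zero_mul_le_mul {a s S : ℝ} (hs : 0 ≤ s) (hsS : s ≤ S) : min a 0 * S ≤ a * s := by
  rcases le_total 0 a with ha | ha
  · rw [min_eq_right ha, zero_mul]; exact mul_nonneg ha hs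
  · rw [min_eq_left ha]; nlinarith

theorem Real.sin_add_le_sin_add_sin {x y : ℝ} (hx : 0 ≤ sin x) (hy : 0 ≤ sin y) :
    sin (x + y) ≤ sin x + sin y := by
  rw [sin_add]
  nlinarith [cos_le_one x, cos_le_one y]

theorem Finset.sum_univ_eq_sum_filter_add_add_sum_filter {ι : Type*} [Fintype ι] [DecidableEq ι]
    (p : ι → Prop) [DecidablePred p] (g : ι → ℝ) {i j : ι} (hij : i ≠ j) (hi : ¬p i)
    (hj : ¬p j) :
    ∑ k, g k = ∑ k ∈ univ.filter p, g k + (g i + g j) +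
      ∑ k ∈ univ.filter (fun k => ¬p k ∧ k ≠ i ∧ k ≠ j), g k := by
  have hrest : ((univ.filter (fun k => ¬p k)).erase i).erase j =
      univ.filter (fun k => ¬p k ∧ k ≠ i ∧ k ≠ j) := by
    ext k
    simp only [mem_erase, mem_filter, mem_univ, true_and]
    tauto
  rw [← sum_filter_add_sum_filter_not univ p, ← hrest,
    ← add_sum_erase _ g (by simpa using hi : i ∈ univ.filter (fun k => ¬p k)),
    ← add_sum_erase _ g
      (by simpa [hj] using hij.symm : j ∈ (univ.filter (fun k => ¬p k)).erase i)]
  ring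

section Coupling

variable {ι : Type*} [Fintype ι] [DecidableEq ι]

theorem coupling_sum_lower_bound {A B φ : ι → ℝ} {i j : ι} (hij : i ≠ j) (hAi : A i = 0)
    (hBj : B j = 0) (hφi : ∀ k, φ k ≤ φ i) (hφj : ∀ k, φ j ≤ φ k) (hπ : φ i - φ j ≤ π / 2) :
    (∑ k ∈ univ.filter (fun k => 0 < A k ∧ 0 < B k), min (A k) (B k) + (A j + B i) -
        ∑ k ∈ univ.filter (fun k => ¬(0 < A k ∧ 0 < B k) ∧ k ≠ i ∧ k ≠ j),
          (-(min (A k) 0) - min (B k) 0)) * sin (φ i - φ j) ≤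
      ∑ k, (A k * sin (φ i - φ k) + B k * sin (φ k - φ j)) := by
  have hsin {x : ℝ} (hx : 0 ≤ x) (hxr : x ≤ φ i - φ j) : 0 ≤ sin x ∧ sin x ≤ sin (φ i - φ j) :=
    ⟨sin_nonneg_of_nonneg_of_le_pi hx (by linarith [pi_pos]),
      sin_le_sin_of_le_of_le_pi_div_two (by linarith [pi_pos]) hπ hxr⟩
  have hx (k : ι) := hsin (sub_nonneg.2 (hφi k)) (by linarith [hφj k])
  have hy (k : ι) := hsin (sub_nonneg.2 (hφj k)) (by linarith [hφi k])
  have hΛ : ∀ k ∈ univ.filter (fun k => 0 < A k ∧ 0 < B k),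
      min (A k) (B k) * sin (φ i - φ j) ≤ A k * sin (φ i - φ k) + B k * sin (φ k - φ j) := by
    intro k hk
    have hmin : 0 ≤ min (A k) (B k) := le_min (mem_filter.1 hk).2.1.le (mem_filter.1 hk).2.2.le
    calc min (A k) (B k) * sin (φ i - φ j)
        ≤ min (A k) (B k) * (sin (φ i - φ k) + sin (φ k - φ j)) := by
          gcongr
          rw [show φ i - φ j = (φ i - φ k) + (φ k - φ j) by ring]
          exact sin_add_le_sin_add_sin (hx k).1 (hy k).1
      _ ≤ _ := min_mul_add_le_mul_add_mul (hx k).1 (hy k).1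
  have hrest : ∀ k ∈ univ.filter (fun k => ¬(0 < A k ∧ 0 < B k) ∧ k ≠ i ∧ k ≠ j),
      -(-(min (A k) 0) - min (B k) 0) * sin (φ i - φ j) ≤
        A k * sin (φ i - φ k) + B k * sin (φ k - φ j) := by
    intro k _
    linarith [min_zero_mul_le_mul (a := A k) (hx k).1 (hx k).2,
      min_zero_mul_le_mul (a := B k) (hy k).1 (hy k).2]
  have hΛsum := sum_le_sum hΛ
  have hrestsum := sum_le_sum hrest
  rw [← sum_mul] at hΛsum hrestsum
  rw [sum_univ_eq_sum_filter_add_add_sum_filter (fun k => 0 < A k ∧ 0 < B k) _ hij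
    (by simp [hAi]) (by simp [hBj])]
  simp only [sum_neg_distrib, sub_self, sin_zero, hAi, hBj, mul_zero] at hrestsum ⊢
  linarith

theorem kuramoto_drift_sub_neg {ω θ : ι → ℝ} {a : ι → ι → ℝ} (hdiag : ∀ k, a k k = 0) {i j : ι}
    (hij : i ≠ j) (hθi : ∀ k, θ k ≤ θ i) (hθj : ∀ k, θ j ≤ θ k) (hπ : θ i - θ j ≤ π / 2)
    (hgap : ω i - ω j <
      (∑ k ∈ univ.filter (fun k => 0 < a i k ∧ 0 < a j k), min (a i k) (a j k) + (a i j + a j i) -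
        ∑ k ∈ univ.filter (fun k => ¬(0 < a i k ∧ 0 < a j k) ∧ k ≠ i ∧ k ≠ j),
          (-(min (a i k) 0) - min (a j k) 0)) * sin (θ i - θ j)) :
    (ω i + ∑ k, a i k * sin (θ k - θ i)) - (ω j + ∑ k, a j k * sin (θ k - θ j)) < 0 := by
  have hcoupling := coupling_sum_lower_bound hij (hdiag i) (hdiag j) hθi hθj hπ
  have hsum : ∑ k, a i k * sin (θ k - θ i) - ∑ k, a j k * sin (θ k - θ j) =
      -∑ k, (a i k * sin (θ i - θ k) + a j k * sin (θ k - θ j)) := by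
    rw [← sum_sub_distrib, ← sum_neg_distrib]
    refine sum_congr rfl fun k _ => ?_
    rw [← neg_sub (θ i), sin_neg]
    ring
  linarith

end Coupling

theorem IsKuramotoSol.eventually_sub_le {m : ℕ} {ω : Fin m → ℝ → ℝ} {a : Fin m → Fin m → ℝ → ℝ}
    {θ : ℝ → Fin m → ℝ} (hθ : IsKuramotoSol m ω a θ) (hdiag : ∀ i t, a i i t = 0) {r t : ℝ}
    (hr : r < π / 2) (ht : 0 ≤ t) (hθt : ∀ k l, |θ t k - θ t l| ≤ r)
    (hgap : ∀ i j, i ≠ j → ω i t - ω j t <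
      (∑ k ∈ univ.filter (fun k => 0 < a i k t ∧ 0 < a j k t), min (a i k t) (a j k t) +
        (a i j t + a j i t) -
        ∑ k ∈ univ.filter (fun k => ¬(0 < a i k t ∧ 0 < a j k t) ∧ k ≠ i ∧ k ≠ j),
          (-(min (a i k t) 0) - min (a j k t) 0)) * sin r) (i j : Fin m) :
    ∀ᶠ s in 𝓝[>] t, θ s i - θ s j ≤ r := by
  obtain rfl | hij := eq_or_ne i j
  · exact Eventually.of_forall fun s => by simpa using (abs_nonneg _).trans (hθt i i)
  refine eventually_nhdsGT_le_of_hasDerivAt ((hθ i t ht).sub (hθ j t ht))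
    (abs_le.1 (hθt i j)).2 fun hr_eq => ?_
  subst hr_eq
  exact kuramoto_drift_sub_neg (ω := (ω · t)) (a := (a · · t)) (hdiag · t) hij
    (fun k => by linarith [(abs_le.1 (hθt k j)).2]) (fun k => by linarith [(abs_le.1 (hθt i k)).2])
    hr.le (hgap i j hij)

theorem stmt1_general
    (m : ℕ)
    (ω : Fin m → ℝ → ℝ) (a : Fin m → Fin m → ℝ → ℝ)
    (hdiag : ∀ i t, a i i t = 0)
    (r : ℝ) (hr1 : r < Real.pi / 2)
    -- `Δω = sup_{t,i≠j} |ω_i - ω_j|`, `μ₀ = inf ...`, `μ₁ = sup ...`,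
    -- `μ₂ = inf ...`, and `Δω < (μ₀ + μ₂ - μ₁)·sin r`, phrased equivalently:
    -- there exist bounds `Δω, μ₀, μ₁, μ₂` of the corresponding quantities
    -- satisfying the strict inequality.
    (hcond : ∃ Δω μ₀ μ₁ μ₂ : ℝ,
      (∀ t, 0 ≤ t → ∀ i j : Fin m, i ≠ j → |ω i t - ω j t| ≤ Δω) ∧
      (∀ t, 0 ≤ t → ∀ i j : Fin m, i ≠ j →
        μ₀ ≤ ∑ k ∈ Finset.univ.filter (fun k => 0 < a i k t ∧ 0 < a j k t),
               min (a i k t) (a j k t)) ∧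
      (∀ t, 0 ≤ t → ∀ i j : Fin m, i ≠ j →
        (∑ k ∈ Finset.univ.filter
            (fun k => ¬(0 < a i k t ∧ 0 < a j k t) ∧ k ≠ i ∧ k ≠ j),
            (-(min (a i k t) 0) - min (a j k t) 0)) ≤ μ₁) ∧
      (∀ t, 0 ≤ t → ∀ i j : Fin m, i ≠ j → μ₂ ≤ a i j t + a j i t) ∧
      Δω < (μ₀ + μ₂ - μ₁) * Real.sin r) :
    InvariantAr m ω a r := by
  obtain ⟨Δω, μ₀, μ₁, μ₂, hΔ, h0, h1, h2, hlt⟩ := hcond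
  intro θ hθ hinit T hT
  suffices Icc 0 T ⊆ θ ⁻¹' {x | ∀ i j, |x i - x j| ≤ r} from this ⟨hT, le_rfl⟩
  refine IsClosed.Icc_subset_of_forall_mem_nhdsWithin ?_ hinit ?_
  · have hcont : ContinuousOn θ (Icc 0 T) := continuousOn_pi.2 fun i s hs =>
      (hθ i s hs.1).continuousAt.continuousWithinAt
    rw [inter_comm]
    refine hcont.preimage_isClosed_of_isClosed isClosed_Icc ?_
    simp only [ofPred_forall]
    exact isClosed_iInter fun i => isClosed_iInter fun j =>
      isClosed_le ((continuous_apply i).sub (continuous_apply j)).abs continuous_const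
  · rintro t ⟨hθt, ht, -⟩
    suffices hpair : ∀ i j, ∀ᶠ s in 𝓝[>] t, θ s i - θ s j ≤ r by
      filter_upwards [eventually_all.2 fun i => eventually_all.2 (hpair i)] with s hs i j
      exact abs_sub_le_iff.2 ⟨hs i j, hs j i⟩
    refine hθ.eventually_sub_le hdiag hr1 ht hθt fun i j hij => ?_
    have hsin : 0 ≤ sin r :=
      sin_nonneg_of_nonneg_of_le_pi ((abs_nonneg _).trans (hθt i i)) (by linarith [pi_pos])
    calc ω i t - ω j t ≤ Δω := (abs_le.1 (hΔ t ht i j hij)).2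
      _ < (μ₀ + μ₂ - μ₁) * sin r := hlt
      _ ≤ _ := mul_le_mul_of_nonneg_right
          (by linarith [h0 t ht i j hij, h1 t ht i j hij, h2 t ht i j hij]) hsin

theorem stmt1
    (m : ℕ) (hm : 2 ≤ m)
    (ω : Fin m → ℝ → ℝ) (a : Fin m → Fin m → ℝ → ℝ)
    (hωc : ∀ i, ContinuousOn (ω i) (Set.Ici 0))
    (hac : ∀ i j, ContinuousOn (a i j) (Set.Ici 0))
    (hdiag : ∀ i t, a i i t = 0)
    (r : ℝ) (hr0 : 0 ≤ r) (hr1 : r < Real.pi / 2)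
    -- `Δω = sup_{t,i≠j} |ω_i - ω_j|`, `μ₀ = inf ...`, `μ₁ = sup ...`,
    -- `μ₂ = inf ...`, and `Δω < (μ₀ + μ₂ - μ₁)·sin r`, phrased equivalently:
    -- there exist bounds `Δω, μ₀, μ₁, μ₂` of the corresponding quantities
    -- satisfying the strict inequality.
    (hcond : ∃ Δω μ₀ μ₁ μ₂ : ℝ,
      (∀ t, 0 ≤ t → ∀ i j : Fin m, i ≠ j → |ω i t - ω j t| ≤ Δω) ∧
      (∀ t, 0 ≤ t → ∀ i j : Fin m, i ≠ j →
        μ₀ ≤ ∑ k ∈ Finset.univ.filter (fun k => 0 < a i k t ∧ 0 < a j k t),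
               min (a i k t) (a j k t)) ∧
      (∀ t, 0 ≤ t → ∀ i j : Fin m, i ≠ j →
        (∑ k ∈ Finset.univ.filter
            (fun k => ¬(0 < a i k t ∧ 0 < a j k t) ∧ k ≠ i ∧ k ≠ j),
            (-(min (a i k t) 0) - min (a j k t) 0)) ≤ μ₁) ∧
      (∀ t, 0 ≤ t → ∀ i j : Fin m, i ≠ j → μ₂ ≤ a i j t + a j i t) ∧
      Δω < (μ₀ + μ₂ - μ₁) * Real.sin r) :
    InvariantAr m ω a r :=
  stmt1_general m ω a hdiag r hr1 hcond
end

section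
/- Let L ∈ ℝ^{m×m} be a symmetric matrix with all row sums zero and let r ∈ [0,π/2). Then xᵀ·L̃^r·x ≤ xᵀ·L·x for every x ∈ ℝ^m with Σ_i x_i = 0; consequently, χ₁ ≥ χ₂, where χ₁ = min{ xᵀLx : ‖x‖ = 1, Σ_i x_i = 0 } and χ₂ = min{ xᵀL̃^r x : ‖x‖ = 1, Σ_i x_i = 0 }. -/
open scoped BigOperators
open Matrix

/-- The `r`-modification `M̃^r` of a matrix `M`: off-diagonal entries are
multiplied by `cos r` when nonpositive and kept when positive; diagonal
entries are minus the sum of the off-diagonal entries of the row. -/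
noncomputable def rmod (m : ℕ) (M : Matrix (Fin m) (Fin m) ℝ) (r : ℝ) :
    Matrix (Fin m) (Fin m) ℝ :=
  Matrix.of fun i j =>
    if i = j then
      -(∑ k ∈ Finset.univ.filter (fun k => k ≠ i),
          (if M i k ≤ 0 then M i k * Real.cos r else M i k))
    else (if M i j ≤ 0 then M i j * Real.cos r else M i j)

/-- The minimum of the quadratic form `xᵀMx` over (Euclidean) unit vectors `x`
orthogonal to `𝟙`, i.e. with `Σᵢ xᵢ = 0`. -/
noncomputable def minFormSumZero (m : ℕ) (M : Matrix (Fin m) (Fin m) ℝ) : ℝ :=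
  sInf {y : ℝ | ∃ x : Fin m → ℝ, (∑ i, x i ^ 2) = 1 ∧ (∑ i, x i) = 0 ∧
    y = x ⬝ᵥ M.mulVec x}

/-! A symmetric matrix with zero row sums is a generalized Laplacian: its quadratic form is
`xᵀMx = -½ Σᵢⱼ Mᵢⱼ (xᵢ - xⱼ)²`, which involves only the off-diagonal entries. Passing from `L`
to `L̃^r` can only increase them, since `cos r ≤ 1`, so the quadratic form can only decrease. The
inequality of minima follows because the quadratic form of `L̃^r` is bounded below on the compact
unit sphere. -/

section Laplacian

variable {ι R : Type*} [Fintype ι]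

theorem Matrix.two_mul_dotProduct_mulVec_eq_neg_sum_sq [CommRing R] {M : Matrix ι ι R}
    (hsym : M.IsSymm) (hrow : ∀ i, ∑ j, M i j = 0) (x : ι → R) :
    2 * (x ⬝ᵥ M *ᵥ x) = -∑ i, ∑ j, M i j * (x i - x j) ^ 2 := by
  have hcol : ∀ j, ∑ i, M i j = 0 := fun j => by simpa only [hsym.apply] using hrow j
  have hdiag_rows : ∑ i, ∑ j, M i j * x i ^ 2 = 0 := by
    simp only [← Finset.sum_mul, hrow, zero_mul, Finset.sum_const_zero]
  have hdiag_cols : ∑ i, ∑ j, M i j * x j ^ 2 = 0 := by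
    rw [Finset.sum_comm]
    simp only [← Finset.sum_mul, hcol, zero_mul, Finset.sum_const_zero]
  have hexpand : ∑ i, ∑ j, M i j * (x i - x j) ^ 2 = ∑ i, ∑ j, M i j * x i ^ 2
      + ∑ i, ∑ j, M i j * x j ^ 2 - 2 * ∑ i, ∑ j, x i * (M i j * x j) := by
    simp only [Finset.mul_sum, ← Finset.sum_add_distrib, ← Finset.sum_sub_distrib]
    exact Finset.sum_congr rfl fun i _ => Finset.sum_congr rfl fun j _ => by ring
  rw [hexpand, hdiag_rows, hdiag_cols]
  simp only [dotProduct, mulVec, Finset.mul_sum]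
  ring

theorem Matrix.dotProduct_mulVec_le_of_offDiag_le [CommRing R] [LinearOrder R]
    [IsStrictOrderedRing R] {M N : Matrix ι ι R} (hMsym : M.IsSymm) (hMrow : ∀ i, ∑ j, M i j = 0)
    (hNsym : N.IsSymm) (hNrow : ∀ i, ∑ j, N i j = 0) (hle : ∀ i j, i ≠ j → M i j ≤ N i j)
    (x : ι → R) : x ⬝ᵥ N *ᵥ x ≤ x ⬝ᵥ M *ᵥ x := by
  have hterm : ∀ i j, M i j * (x i - x j) ^ 2 ≤ N i j * (x i - x j) ^ 2 := fun i j => by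
    rcases eq_or_ne i j with rfl | hij
    · simp
    · exact mul_le_mul_of_nonneg_right (hle i j hij) (sq_nonneg _)
  have hsum := Finset.sum_le_sum fun i (_ : i ∈ Finset.univ) =>
    Finset.sum_le_sum fun j (_ : j ∈ Finset.univ) => hterm i j
  have := two_mul_dotProduct_mulVec_eq_neg_sum_sq hMsym hMrow x
  have := two_mul_dotProduct_mulVec_eq_neg_sum_sq hNsym hNrow x
  linarith

end Laplacian

section Modification

variable {m : ℕ} (M : Matrix (Fin m) (Fin m) ℝ) (r : ℝ)

theorem rmod_apply_of_ne {i j : Fin m} (hij : i ≠ j) :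
    rmod m M r i j = if M i j ≤ 0 then M i j * Real.cos r else M i j := by
  simp [rmod, hij]

theorem le_rmod_apply_of_ne {i j : Fin m} (hij : i ≠ j) : M i j ≤ rmod m M r i j := by
  rw [rmod_apply_of_ne M r hij]
  split_ifs with hM
  · exact le_mul_of_le_one_right hM (Real.cos_le_one r)
  · exact le_rfl

theorem rmod_isSymm {M : Matrix (Fin m) (Fin m) ℝ} (hsym : M.IsSymm) : (rmod m M r).IsSymm := by
  ext i j
  rcases eq_or_ne i j with rfl | hij
  · rfl
  · rw [transpose_apply, rmod_apply_of_ne M r hij, rmod_apply_of_ne M r hij.symm, hsym.apply]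

theorem rmod_row_sum (i : Fin m) : ∑ j, rmod m M r i j = 0 := by
  rw [← Finset.add_sum_erase _ _ (Finset.mem_univ i),
    Finset.sum_congr rfl fun j hj => rmod_apply_of_ne M r (Finset.ne_of_mem_erase hj).symm]
  simp [rmod, Finset.filter_ne']

end Modification

section Minimum

theorem isCompact_sum_sq_eq_one {ι : Type*} [Fintype ι] :
    IsCompact {x : ι → ℝ | ∑ i, x i ^ 2 = 1} := by
  refine Metric.isCompact_of_isClosed_isBounded (isClosed_eq (by fun_prop) continuous_const) ?_
  refine (Metric.isBounded_closedBall (x := 0) (r := 1)).subset fun x hx => ?_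
  rw [mem_closedBall_zero_iff, pi_norm_le_iff_of_nonneg zero_le_one]
  intro i
  rw [Real.norm_eq_abs, ← sq_le_one_iff_abs_le_one, ← hx]
  exact Finset.single_le_sum (fun k _ => sq_nonneg (x k)) (Finset.mem_univ i)

theorem minFormSumZero_eq_iInf (m : ℕ) (M : Matrix (Fin m) (Fin m) ℝ) :
    minFormSumZero m M =
      ⨅ x : {x : Fin m → ℝ | (∑ i, x i ^ 2) = 1 ∧ (∑ i, x i) = 0}, (x : Fin m → ℝ) ⬝ᵥ M *ᵥ x := by
  rw [minFormSumZero, ← sInf_image' (f := fun x : Fin m → ℝ => x ⬝ᵥ M *ᵥ x)]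
  congr 1
  ext y
  simp only [Set.mem_ofPred_eq, Set.mem_image, and_assoc, eq_comm (a := y)]

theorem minFormSumZero_mono {m : ℕ} {M N : Matrix (Fin m) (Fin m) ℝ}
    (hle : ∀ x : Fin m → ℝ, (∑ i, x i) = 0 → x ⬝ᵥ N *ᵥ x ≤ x ⬝ᵥ M *ᵥ x) :
    minFormSumZero m N ≤ minFormSumZero m M := by
  rw [minFormSumZero_eq_iInf, minFormSumZero_eq_iInf]
  refine ciInf_mono ?_ fun x => hle x x.2.2
  refine (isCompact_sum_sq_eq_one.bddBelow_image (f := fun x => x ⬝ᵥ N *ᵥ x)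
    (by fun_prop)).mono ?_
  rintro _ ⟨x, rfl⟩
  exact ⟨x, x.2.1, rfl⟩

end Minimum

theorem stmt5_general
    (m : ℕ) (L : Matrix (Fin m) (Fin m) ℝ)
    (hsym : L.IsSymm) (hrow : ∀ i, ∑ j, L i j = 0)
    (r : ℝ) :
    (∀ x : Fin m → ℝ, (∑ i, x i) = 0 →
      x ⬝ᵥ (rmod m L r).mulVec x ≤ x ⬝ᵥ L.mulVec x) ∧
    minFormSumZero m (rmod m L r) ≤ minFormSumZero m L := by
  have hform : ∀ x : Fin m → ℝ, (∑ i, x i) = 0 → x ⬝ᵥ rmod m L r *ᵥ x ≤ x ⬝ᵥ L *ᵥ x :=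
    fun x _ => dotProduct_mulVec_le_of_offDiag_le hsym hrow (rmod_isSymm r hsym)
      (rmod_row_sum L r) (fun _ _ => le_rmod_apply_of_ne L r) x
  exact ⟨hform, minFormSumZero_mono hform⟩

theorem stmt5
    (m : ℕ) (L : Matrix (Fin m) (Fin m) ℝ)
    (hsym : L.IsSymm) (hrow : ∀ i, ∑ j, L i j = 0)
    (r : ℝ) (hr0 : 0 ≤ r) (hr1 : r < Real.pi / 2) :
    (∀ x : Fin m → ℝ, (∑ i, x i) = 0 →
      x ⬝ᵥ (rmod m L r).mulVec x ≤ x ⬝ᵥ L.mulVec x) ∧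
    minFormSumZero m (rmod m L r) ≤ minFormSumZero m L :=
  stmt5_general m L hsym hrow r
end

section
/- Let G : [0,∞) → ℝ^{m×m} be continuous with G(t) symmetric, positive semidefinite, all row sums zero, and ‖G(t)‖ ≤ R for all t ≥ 0, where ‖·‖ is the operator norm. Fix h > 0 and for k = 0,1,2,… set β_k = min{ xᵀ·((1/h)∫_{kh}^{(k+1)h} G(τ) dτ)·x : ‖x‖ = 1, Σ_i x_i = 0 }. If Σ_{k=0}^∞ β_k = ∞, then every solution x : [0,∞) → ℝ^m of ẋ = −G(t)x reaches consensus: lim_{t→∞}(x_i(t) − x_j(t)) = 0 for all i,j. -/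
/-!
Let `y = x - x̄ 𝟙` be the deviation of the solution from its mean. Since `G t` has zero row and
column sums, `y` solves the same equation and `∑ i, y i = 0`, while its energy `V = |y|²`
decreases at rate `2 yᵀ G y`. On a window `[a, a + h]` the integral form of the equation,
Young's inequality and `|G y|² ≤ R yᵀ G y` give `|y t - y a|² ≤ R h ∫ yᵀ G y`; with the
parallelogram bound `uᵀ G u ≤ 2 vᵀ G v + 2 (u - v)ᵀ G (u - v)` this yields
`h β_k V(kh) ≤ (1 + R²h²) (V(kh) - V((k+1)h))`. If `V(kh) ≥ ε` for every `k`, summing would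
bound `∑ β_k`; hence `V → 0`.
-/

open Matrix Set Filter Topology

section QuadraticForm

variable {n : Type*} [Fintype n] {A : Matrix n n ℝ}

namespace Matrix.PosSemidef

lemma dotProduct_mulVec_self_nonneg (hA : A.PosSemidef) (x : n → ℝ) : 0 ≤ x ⬝ᵥ A *ᵥ x := by
  simpa using hA.dotProduct_mulVec_nonneg x

lemma sq_dotProduct_mulVec_le (hA : A.PosSemidef) (x y : n → ℝ) :
    (x ⬝ᵥ A *ᵥ y) ^ 2 ≤ (x ⬝ᵥ A *ᵥ x) * (y ⬝ᵥ A *ᵥ y) := by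
  classical
  have hsymm : LinearMap.IsSymm A.toBilin' := LinearMap.BilinForm.isSymm_iff.1 <|
    isSymm_toBilin'_iff_isSymm.2 (isHermitian_iff_isSymm.1 hA.isHermitian)
  have hnonneg : ∀ z, 0 ≤ A.toBilin' z z := fun z => by
    simpa [toBilin'_apply'] using hA.dotProduct_mulVec_self_nonneg z
  simpa [toBilin'_apply'] using A.toBilin'.apply_sq_le_of_symm hnonneg hsymm x y

lemma sub_dotProduct_mulVec_sub_le (hA : A.PosSemidef) (x y : n → ℝ) :
    (x - y) ⬝ᵥ A *ᵥ (x - y) ≤ 2 * (x ⬝ᵥ A *ᵥ x) + 2 * (y ⬝ᵥ A *ᵥ y) := by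
  have := hA.dotProduct_mulVec_self_nonneg (x + y)
  simp only [mulVec_add, mulVec_sub, dotProduct_add, dotProduct_sub, add_dotProduct,
    sub_dotProduct] at this ⊢
  linarith

end Matrix.PosSemidef

lemma dotProduct_mulVec_self_le {R : ℝ} (hR : 0 ≤ R)
    (hAR : ∀ v, ∑ i, (A *ᵥ v) i ^ 2 ≤ R ^ 2 * ∑ i, v i ^ 2) (v : n → ℝ) :
    v ⬝ᵥ A *ᵥ v ≤ R * ∑ i, v i ^ 2 := by
  have hcs := Finset.sum_mul_sq_le_sq_mul_sq Finset.univ v (A *ᵥ v)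
  have hv : 0 ≤ ∑ i, v i ^ 2 := by positivity
  refine abs_le_of_sq_le_sq' ?_ (by positivity) |>.2
  calc (v ⬝ᵥ A *ᵥ v) ^ 2 ≤ (∑ i, v i ^ 2) * (R ^ 2 * ∑ i, v i ^ 2) :=
        hcs.trans (mul_le_mul_of_nonneg_left (hAR v) hv)
    _ = (R * ∑ i, v i ^ 2) ^ 2 := by ring

lemma Matrix.PosSemidef.sum_mulVec_sq_le {R : ℝ} (hA : A.PosSemidef) (hR : 0 ≤ R)
    (hAR : ∀ v, ∑ i, (A *ᵥ v) i ^ 2 ≤ R ^ 2 * ∑ i, v i ^ 2) (v : n → ℝ) :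
    ∑ i, (A *ᵥ v) i ^ 2 ≤ R * (v ⬝ᵥ A *ᵥ v) := by
  set N := ∑ i, (A *ᵥ v) i ^ 2
  have hN : N = v ⬝ᵥ A *ᵥ (A *ᵥ v) := by
    rw [dotProduct_mulVec, ← mulVec_transpose, (isHermitian_iff_isSymm.1 hA.isHermitian).eq,
      dotProduct_comm]
    simp [N, dotProduct, sq]
  have hcs := hA.sq_dotProduct_mulVec_le v (A *ᵥ v)
  have hquad := dotProduct_mulVec_self_le hR hAR (A *ᵥ v)
  rw [← hN] at hcs
  rcases (show 0 ≤ N by positivity).eq_or_lt with hN0 | hN0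
  · rw [← hN0]
    exact mul_nonneg hR (hA.dotProduct_mulVec_self_nonneg v)
  refine le_of_mul_le_mul_right ?_ hN0
  calc N * N = N ^ 2 := (sq N).symm
    _ ≤ (v ⬝ᵥ A *ᵥ v) * (R * N) :=
      hcs.trans (mul_le_mul_of_nonneg_left hquad (hA.dotProduct_mulVec_self_nonneg v))
    _ = R * (v ⬝ᵥ A *ᵥ v) * N := by ring

end QuadraticForm

section Continuity

variable {n X : Type*} [Fintype n] [TopologicalSpace X] {s : Set X}
  {A : X → Matrix n n ℝ} {u v : X → n → ℝ}

lemma ContinuousOn.matrix_mulVec (hA : ContinuousOn A s) (hv : ContinuousOn v s) :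
    ContinuousOn (fun x => A x *ᵥ v x) s := by
  rw [continuousOn_iff_continuous_domRestrict] at *
  exact hA.matrix_mulVec hv

lemma ContinuousOn.dotProduct (hu : ContinuousOn u s) (hv : ContinuousOn v s) :
    ContinuousOn (fun x => u x ⬝ᵥ v x) s := by
  rw [continuousOn_iff_continuous_domRestrict] at *
  exact hu.dotProduct hv

lemma ContinuousOn.dotProduct_mulVec (hu : ContinuousOn u s) (hA : ContinuousOn A s)
    (hv : ContinuousOn v s) : ContinuousOn (fun x => u x ⬝ᵥ A x *ᵥ v x) s :=
  hu.dotProduct (hA.matrix_mulVec hv)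

end Continuity

section Averages

variable {n : Type*} [Fintype n]

noncomputable def algebraicConnectivity (A : Matrix n n ℝ) : ℝ :=
  sInf {y : ℝ | ∃ x : n → ℝ, (∑ i, x i ^ 2) = 1 ∧ (∑ i, x i) = 0 ∧ y = x ⬝ᵥ A *ᵥ x}

noncomputable def intervalAverage (G : ℝ → Matrix n n ℝ) (a b : ℝ) : Matrix n n ℝ :=
  of fun i j => 1 / (b - a) * ∫ t in a..b, G t i j

variable {A : Matrix n n ℝ}

lemma algebraicConnectivity_nonneg (hA : ∀ x, 0 ≤ x ⬝ᵥ A *ᵥ x) :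
    0 ≤ algebraicConnectivity A :=
  Real.sInf_nonneg (by rintro _ ⟨x, -, -, rfl⟩; exact hA x)

lemma algebraicConnectivity_mul_le (hA : ∀ x, 0 ≤ x ⬝ᵥ A *ᵥ x) {u : n → ℝ}
    (hu : ∑ i, u i = 0) : algebraicConnectivity A * ∑ i, u i ^ 2 ≤ u ⬝ᵥ A *ᵥ u := by
  set S := ∑ i, u i ^ 2
  rcases (show 0 ≤ S by positivity).eq_or_lt with hS | hS
  · rw [← hS, mul_zero]
    exact hA u
  set c := (√S)⁻¹
  have hc : c ^ 2 * S = 1 := by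
    rw [inv_pow, Real.sq_sqrt hS.le, inv_mul_cancel₀ hS.ne']
  have hle : algebraicConnectivity A ≤ (c • u) ⬝ᵥ A *ᵥ (c • u) := by
    refine csInf_le ⟨0, ?_⟩ ⟨c • u, ?_, ?_, rfl⟩
    · rintro _ ⟨x, -, -, rfl⟩
      exact hA x
    · simpa [mul_pow, ← Finset.mul_sum] using hc
    · simp [← Finset.mul_sum, hu]
  rw [mulVec_smul, dotProduct_smul, smul_dotProduct, smul_eq_mul, smul_eq_mul, ← mul_assoc,
    ← sq] at hle
  calc algebraicConnectivity A * S ≤ c ^ 2 * (u ⬝ᵥ A *ᵥ u) * S :=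
        mul_le_mul_of_nonneg_right hle hS.le
    _ = u ⬝ᵥ A *ᵥ u := by rw [mul_right_comm, hc, one_mul]

variable {G : ℝ → Matrix n n ℝ} {a b : ℝ}

lemma dotProduct_mulVec_intervalAverage
    (hG : ∀ i j, IntervalIntegrable (fun t => G t i j) MeasureTheory.volume a b)
    (u v : n → ℝ) :
    u ⬝ᵥ intervalAverage G a b *ᵥ v = 1 / (b - a) * ∫ t in a..b, u ⬝ᵥ G t *ᵥ v := by
  have hint : ∀ i j, IntervalIntegrable (fun t => u i * (G t i j * v j))
      MeasureTheory.volume a b := fun i j => ((hG i j).mul_const (v j)).const_mul (u i)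
  have hrow : ∀ i, IntervalIntegrable (fun t => ∑ j, u i * (G t i j * v j))
      MeasureTheory.volume a b := fun i => by
    simpa only [Finset.sum_fn] using IntervalIntegrable.sum _ fun j _ => hint i j
  calc u ⬝ᵥ intervalAverage G a b *ᵥ v
      = 1 / (b - a) * ∑ i, ∑ j, ∫ t in a..b, u i * (G t i j * v j) := by
        simp only [intervalAverage, dotProduct, mulVec, of_apply, Finset.mul_sum,
          intervalIntegral.integral_const_mul, intervalIntegral.integral_mul_const]
        exact Finset.sum_congr rfl fun i _ => Finset.sum_congr rfl fun j _ => by ring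
    _ = 1 / (b - a) * ∫ t in a..b, u ⬝ᵥ G t *ᵥ v := by
        simp only [dotProduct, mulVec, Finset.mul_sum]
        rw [intervalIntegral.integral_finsetSum fun i _ => hrow i]
        simp_rw [intervalIntegral.integral_finsetSum fun j _ => hint _ j, Finset.mul_sum]

lemma dotProduct_mulVec_intervalAverage_nonneg (hab : a ≤ b) (hGc : ContinuousOn G (Icc a b))
    (hG : ∀ t ∈ Icc a b, (G t).PosSemidef) (u : n → ℝ) :
    0 ≤ u ⬝ᵥ intervalAverage G a b *ᵥ u := by
  rw [dotProduct_mulVec_intervalAverage fun i j =>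
    (continuousOn_pi.1 (continuousOn_pi.1 hGc i) j).intervalIntegrable_of_Icc hab]
  exact mul_nonneg (one_div_nonneg.2 (sub_nonneg.2 hab))
    (intervalIntegral.integral_nonneg hab fun t ht => (hG t ht).dotProduct_mulVec_self_nonneg u)

end Averages

section Mean

variable {n : Type*} [Fintype n]

lemma sum_sub_sum_div_card (v : n → ℝ) : ∑ i, (v i - (∑ j, v j) / Fintype.card n) = 0 := by
  rcases isEmpty_or_nonempty n with hn | hn
  · simp
  · rw [Finset.sum_sub_distrib, Finset.sum_const, Finset.card_univ, nsmul_eq_mul,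
      mul_div_cancel₀ _ (Nat.cast_ne_zero.2 Fintype.card_ne_zero), sub_self]

lemma sum_mulVec_eq_zero {A : Matrix n n ℝ} (hA : ∀ j, ∑ i, A i j = 0) (v : n → ℝ) :
    ∑ i, (A *ᵥ v) i = 0 := by
  simp only [mulVec, dotProduct]
  rw [Finset.sum_comm]
  simp [← Finset.sum_mul, hA]

lemma mulVec_sub_const {A : Matrix n n ℝ} (hA : ∀ i, ∑ j, A i j = 0) (v : n → ℝ) (c : ℝ) :
    A *ᵥ (fun i => v i - c) = A *ᵥ v := by
  ext i
  simp [mulVec, dotProduct, mul_sub, Finset.sum_sub_distrib, ← Finset.sum_mul, hA]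

end Mean

section Flow

variable {n : Type*} [Fintype n]

def SolvesOn (G : ℝ → Matrix n n ℝ) (y : ℝ → n → ℝ) (s : Set ℝ) : Prop :=
  ∀ i, ∀ t ∈ s, HasDerivAt (fun τ => y τ i) (-(G t *ᵥ y t) i) t

namespace SolvesOn

variable {G : ℝ → Matrix n n ℝ} {y : ℝ → n → ℝ} {s : Set ℝ} {a b R : ℝ}

lemma mono {s' : Set ℝ} (hy : SolvesOn G y s) (hs : s' ⊆ s) : SolvesOn G y s' :=
  fun i t ht => hy i t (hs ht)

lemma continuousOn (hy : SolvesOn G y s) : ContinuousOn y s :=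
  continuousOn_pi.2 fun i t ht => (hy i t ht).continuousAt.continuousWithinAt

lemma sub_mean (hy : SolvesOn G y s) (hrow : ∀ t ∈ s, ∀ i, ∑ j, G t i j = 0)
    (hcol : ∀ t ∈ s, ∀ j, ∑ i, G t i j = 0) :
    SolvesOn G (fun t i => y t i - (∑ j, y t j) / Fintype.card n) s := by
  intro i t ht
  have hmean : HasDerivAt (fun τ => (∑ j, y τ j) / Fintype.card n) 0 t := by
    refine ((HasDerivAt.fun_sum fun j _ => hy j t ht).div_const _).congr_deriv ?_
    rw [Finset.sum_neg_distrib, sum_mulVec_eq_zero (hcol t ht), neg_zero, zero_div]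
  simpa [mulVec_sub_const (hrow t ht)] using (hy i t ht).fun_sub hmean

lemma hasDerivAt_sum_sq (hy : SolvesOn G y s) {t : ℝ} (ht : t ∈ s) :
    HasDerivAt (fun τ => ∑ i, y τ i ^ 2) (-2 * (y t ⬝ᵥ G t *ᵥ y t)) t := by
  refine (HasDerivAt.fun_sum fun i _ => (hy i t ht).fun_pow 2).congr_deriv ?_
  simp only [dotProduct, Finset.mul_sum]
  exact Finset.sum_congr rfl fun i _ => by push_cast; ring

lemma antitoneOn_sum_sq (hy : SolvesOn G y s) (hs : Convex ℝ s)
    (hG : ∀ t ∈ s, (G t).PosSemidef) : AntitoneOn (fun τ => ∑ i, y τ i ^ 2) s :=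
  antitoneOn_of_hasDerivWithinAt_nonpos hs
    (fun t ht => (hy.hasDerivAt_sum_sq ht).continuousAt.continuousWithinAt)
    (fun t ht => (hy.hasDerivAt_sum_sq (interior_subset ht)).hasDerivWithinAt)
    (fun t ht => by
      have := (hG t (interior_subset ht)).dotProduct_mulVec_self_nonneg (y t)
      linarith)

variable (hab : a ≤ b) (hy : SolvesOn G y (Icc a b)) (hGc : ContinuousOn G (Icc a b))
include hab hy hGc

lemma sum_sq_sub_sum_sq :
    ∑ i, y a i ^ 2 - ∑ i, y b i ^ 2 = 2 * ∫ t in a..b, y t ⬝ᵥ G t *ᵥ y t := by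
  have hq := hy.continuousOn.dotProduct_mulVec hGc hy.continuousOn
  have hFTC := intervalIntegral.integral_eq_sub_of_hasDerivAt
    (fun t ht => hy.hasDerivAt_sum_sq (uIcc_of_le hab ▸ ht))
    ((hq.const_smul (-2 : ℝ)).intervalIntegrable_of_Icc hab)
  rw [intervalIntegral.integral_const_mul] at hFTC
  linarith

variable (hG : ∀ t ∈ Icc a b, (G t).PosSemidef) (hR : 0 ≤ R)
  (hGR : ∀ t ∈ Icc a b, ∀ v, ∑ i, (G t *ᵥ v) i ^ 2 ≤ R ^ 2 * ∑ i, v i ^ 2)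
include hG hR hGR

lemma sum_sub_sq_le :
    ∑ i, (y b i - y a i) ^ 2 ≤ R * (b - a) * ∫ t in a..b, y t ⬝ᵥ G t *ᵥ y t := by
  rcases hab.eq_or_lt with rfl | hlt
  · simp
  set e : n → ℝ := fun i => y b i - y a i
  set E := ∑ i, e i ^ 2
  set h := b - a
  have hw : ∀ i, ContinuousOn (fun t => -(G t *ᵥ y t) i) (Icc a b) := fun i =>
    (continuousOn_pi.1 (hGc.matrix_mulVec hy.continuousOn) i).neg
  have hq := hy.continuousOn.dotProduct_mulVec hGc hy.continuousOn
  have hE : E = ∫ t in a..b, e ⬝ᵥ -(G t *ᵥ y t) := by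
    have hFTC : ∀ i, ∫ t in a..b, -(G t *ᵥ y t) i = e i := fun i =>
      intervalIntegral.integral_eq_sub_of_hasDerivAt (fun t ht => hy i t (uIcc_of_le hab ▸ ht))
        ((hw i).intervalIntegrable_of_Icc hab)
    simp only [dotProduct, Pi.neg_apply]
    rw [intervalIntegral.integral_finsetSum fun i _ =>
      ((hw i).intervalIntegrable_of_Icc hab).const_mul (e i)]
    refine Finset.sum_congr rfl fun i _ => ?_
    rw [intervalIntegral.integral_const_mul, hFTC, sq]
  have hpt : ∀ t ∈ Icc a b, 2 * h * (e ⬝ᵥ -(G t *ᵥ y t)) ≤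
      E + h ^ 2 * R * (y t ⬝ᵥ G t *ᵥ y t) := by
    intro t ht
    have hyoung : 2 * h * (e ⬝ᵥ -(G t *ᵥ y t)) ≤ E + h ^ 2 * ∑ i, (G t *ᵥ y t) i ^ 2 := by
      simp only [dotProduct, Pi.neg_apply, E, Finset.mul_sum, ← Finset.sum_add_distrib]
      exact Finset.sum_le_sum fun i _ => by
        nlinarith [sq_nonneg (e i + h * (G t *ᵥ y t) i)]
    have hGy := (hG t ht).sum_mulVec_sq_le hR (hGR t ht) (y t)
    nlinarith [sq_nonneg h]
  have hint : 2 * h * E ≤ h * E + h ^ 2 * R * ∫ t in a..b, y t ⬝ᵥ G t *ᵥ y t := by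
    calc 2 * h * E = ∫ t in a..b, 2 * h * (e ⬝ᵥ -(G t *ᵥ y t)) := by
          rw [hE, intervalIntegral.integral_const_mul]
      _ ≤ ∫ t in a..b, (E + h ^ 2 * R * (y t ⬝ᵥ G t *ᵥ y t)) := by
          refine intervalIntegral.integral_mono_on hab ?_ ?_ hpt
          · exact (continuousOn_const.mul (continuousOn_const.dotProduct
              (hGc.matrix_mulVec hy.continuousOn).neg)).intervalIntegrable_of_Icc hab
          · exact (continuousOn_const.add (continuousOn_const.mul hq)).intervalIntegrable_of_Icc hab
      _ = h * E + h ^ 2 * R * ∫ t in a..b, y t ⬝ᵥ G t *ᵥ y t := by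
          rw [intervalIntegral.integral_add intervalIntegrable_const
            ((hq.intervalIntegrable_of_Icc hab).const_mul _),
            intervalIntegral.integral_const, intervalIntegral.integral_const_mul, smul_eq_mul]
  refine le_of_mul_le_mul_left ?_ (sub_pos.2 hlt)
  linarith

lemma integral_dotProduct_mulVec_le :
    ∫ t in a..b, y a ⬝ᵥ G t *ᵥ y a ≤
      (1 + R ^ 2 * (b - a) ^ 2) * (∑ i, y a i ^ 2 - ∑ i, y b i ^ 2) := by
  set W := ∫ t in a..b, y t ⬝ᵥ G t *ᵥ y t
  have hq := hy.continuousOn.dotProduct_mulVec hGc hy.continuousOn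
  have hpt : ∀ t ∈ Icc a b, y a ⬝ᵥ G t *ᵥ y a ≤
      2 * (y t ⬝ᵥ G t *ᵥ y t) + 2 * R ^ 2 * (b - a) * W := by
    intro t ht
    have hsub : Icc a t ⊆ Icc a b := Icc_subset_Icc_right ht.2
    have hW : ∫ s in a..t, y s ⬝ᵥ G s *ᵥ y s ≤ W :=
      intervalIntegral.integral_mono_interval le_rfl ht.1 ht.2
        ((MeasureTheory.ae_restrict_iff' measurableSet_Ioc).2 <| .of_forall fun s hs =>
          (hG s (Ioc_subset_Icc_self hs)).dotProduct_mulVec_self_nonneg _)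
        (hq.intervalIntegrable_of_Icc hab)
    have hI : 0 ≤ ∫ s in a..t, y s ⬝ᵥ G s *ᵥ y s := intervalIntegral.integral_nonneg ht.1
      fun s hs => (hG s (hsub hs)).dotProduct_mulVec_self_nonneg _
    have hdisp := (hy.mono hsub).sum_sub_sq_le ht.1 (hGc.mono hsub)
      (fun s hs => hG s (hsub hs)) hR (fun s hs => hGR s (hsub hs))
    have hdrift : (y t - y a) ⬝ᵥ G t *ᵥ (y t - y a) ≤ R ^ 2 * (b - a) * W := calc
      _ ≤ R * ∑ i, (y t i - y a i) ^ 2 := by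
          simpa only [Pi.sub_apply] using dotProduct_mulVec_self_le hR (hGR t ht) (y t - y a)
      _ ≤ R * (R * (t - a) * ∫ s in a..t, y s ⬝ᵥ G s *ᵥ y s) := by gcongr
      _ ≤ R * (R * (b - a) * W) := by gcongr; linarith [ht.2]
      _ = R ^ 2 * (b - a) * W := by ring
    have hpar := (hG t ht).sub_dotProduct_mulVec_sub_le (y t) (y t - y a)
    rw [sub_sub_cancel] at hpar
    linarith
  calc ∫ t in a..b, y a ⬝ᵥ G t *ᵥ y a
      ≤ ∫ t in a..b, (2 * (y t ⬝ᵥ G t *ᵥ y t) + 2 * R ^ 2 * (b - a) * W) :=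
        intervalIntegral.integral_mono_on hab
          ((continuousOn_const.dotProduct_mulVec hGc continuousOn_const).intervalIntegrable_of_Icc
            hab)
          ((continuousOn_const.mul hq).add continuousOn_const |>.intervalIntegrable_of_Icc hab) hpt
    _ = (1 + R ^ 2 * (b - a) ^ 2) * (2 * W) := by
        rw [intervalIntegral.integral_add ((hq.intervalIntegrable_of_Icc hab).const_mul _)
          intervalIntegrable_const, intervalIntegral.integral_const_mul,
          intervalIntegral.integral_const, smul_eq_mul]
        ring
    _ = _ := by rw [hy.sum_sq_sub_sum_sq hab hGc]

lemma algebraicConnectivity_intervalAverage_mul_le (hy0 : ∑ i, y a i = 0) :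
    algebraicConnectivity (intervalAverage G a b) * ∑ i, y a i ^ 2 ≤
      (1 + R ^ 2 * (b - a) ^ 2) / (b - a) * (∑ i, y a i ^ 2 - ∑ i, y b i ^ 2) := by
  have hint : ∀ i j, IntervalIntegrable (fun t => G t i j) MeasureTheory.volume a b :=
    fun i j => (continuousOn_pi.1 (continuousOn_pi.1 hGc i) j).intervalIntegrable_of_Icc hab
  calc algebraicConnectivity (intervalAverage G a b) * ∑ i, y a i ^ 2
      ≤ 1 / (b - a) * ∫ t in a..b, y a ⬝ᵥ G t *ᵥ y a := by
        rw [← dotProduct_mulVec_intervalAverage hint]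
        exact algebraicConnectivity_mul_le
          (dotProduct_mulVec_intervalAverage_nonneg hab hGc hG) hy0
    _ ≤ 1 / (b - a) * ((1 + R ^ 2 * (b - a) ^ 2) * (∑ i, y a i ^ 2 - ∑ i, y b i ^ 2)) :=
        mul_le_mul_of_nonneg_left (hy.integral_dotProduct_mulVec_le hab hGc hG hR hGR)
          (one_div_nonneg.2 (sub_nonneg.2 hab))
    _ = _ := by ring

end SolvesOn

end Flow

section Limits

lemma tendsto_zero_of_mul_le_sub {v β : ℕ → ℝ} {C : ℝ} (hv : ∀ k, 0 ≤ v k) (hanti : Antitone v)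
    (hβ : ∀ k, 0 ≤ β k) (hC : 0 ≤ C) (hstep : ∀ k, β k * v k ≤ C * (v k - v (k + 1)))
    (hdiv : Tendsto (fun N => ∑ k ∈ Finset.range N, β k) atTop atTop) :
    Tendsto v atTop (𝓝 0) := by
  refine tendsto_order.2 ⟨fun a ha => .of_forall fun k => ha.trans_le (hv k), fun ε hε => ?_⟩
  obtain ⟨k, hk⟩ : ∃ k, v k < ε := by
    by_contra! hge
    have hbdd : ∀ N, ε * ∑ k ∈ Finset.range N, β k ≤ C * v 0 := fun N => calc
      ε * ∑ k ∈ Finset.range N, β k ≤ ∑ k ∈ Finset.range N, β k * v k := by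
        rw [Finset.mul_sum]
        exact Finset.sum_le_sum fun k _ => by nlinarith [hge k, hβ k]
      _ ≤ ∑ k ∈ Finset.range N, C * (v k - v (k + 1)) := Finset.sum_le_sum fun k _ => hstep k
      _ = C * (v 0 - v N) := by rw [← Finset.mul_sum, Finset.sum_range_sub']
      _ ≤ C * v 0 := mul_le_mul_of_nonneg_left (by linarith [hv N]) hC
    obtain ⟨N, hN⟩ := (hdiv.eventually_gt_atTop (C * v 0 / ε)).exists
    have := hbdd N
    rw [div_lt_iff₀ hε] at hN
    linarith
  exact eventually_atTop.2 ⟨k, fun j hj => (hanti hj).trans_lt hk⟩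

lemma tendsto_zero_of_antitoneOn_of_mul_le_sub {f : ℝ → ℝ} {β : ℕ → ℝ} {h C : ℝ} (hh : 0 ≤ h)
    (hf : AntitoneOn f (Ici 0)) (hf0 : ∀ t, 0 ≤ t → 0 ≤ f t) (hβ : ∀ k, 0 ≤ β k) (hC : 0 ≤ C)
    (hstep : ∀ k : ℕ, β k * f (k * h) ≤ C * (f (k * h) - f ((k + 1 : ℕ) * h)))
    (hdiv : Tendsto (fun N => ∑ k ∈ Finset.range N, β k) atTop atTop) :
    Tendsto f atTop (𝓝 0) := by
  have hseq : Tendsto (fun k : ℕ => f (k * h)) atTop (𝓝 0) :=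
    tendsto_zero_of_mul_le_sub (fun k => hf0 _ (by positivity))
      (fun k l hkl => hf (by simp; positivity) (by simp; positivity) (by gcongr)) hβ hC hstep hdiv
  refine tendsto_order.2 ⟨fun a ha => eventually_atTop.2 ⟨0, fun t ht => ha.trans_le (hf0 t ht)⟩,
    fun ε hε => ?_⟩
  obtain ⟨k, hk⟩ := (hseq.eventually (gt_mem_nhds hε)).exists
  have hkh : (0 : ℝ) ≤ k * h := by positivity
  exact eventually_atTop.2 ⟨k * h, fun t ht => (hf hkh (hkh.trans ht) ht).trans_lt hk⟩

lemma tendsto_apply_of_tendsto_sum_sq {α n : Type*} [Fintype n] {l : Filter α} {v : α → n → ℝ}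
    (hv : Tendsto (fun a => ∑ i, v a i ^ 2) l (𝓝 0)) (i : n) :
    Tendsto (fun a => v a i) l (𝓝 0) := by
  have hsq : Tendsto (fun a => v a i ^ 2) l (𝓝 0) := squeeze_zero (fun _ => sq_nonneg _)
    (fun a => Finset.single_le_sum (fun j _ => sq_nonneg (v a j)) (Finset.mem_univ i)) hv
  rw [tendsto_zero_iff_abs_tendsto_zero]
  simpa [Function.comp_def, Real.sqrt_sq_eq_abs] using (Real.continuous_sqrt.tendsto 0).comp hsq

end Limits

theorem stmt7_general
    (m : ℕ) (R : ℝ) (hR : 0 ≤ R)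
    (G : ℝ → Matrix (Fin m) (Fin m) ℝ)
    (hGc : ∀ i j, ContinuousOn (fun t => G t i j) (Set.Ici 0))
    (hsym : ∀ t, 0 ≤ t → (G t).IsSymm)
    (hpsd : ∀ t, 0 ≤ t → ∀ x : Fin m → ℝ, 0 ≤ x ⬝ᵥ (G t).mulVec x)
    (hrow : ∀ t, 0 ≤ t → ∀ i, ∑ j, G t i j = 0)
    -- operator norm bound `‖G(t)‖ ≤ R` (Euclidean operator norm)
    (hnorm : ∀ t, 0 ≤ t → ∀ x : Fin m → ℝ,
      ∑ i, ((G t).mulVec x i) ^ 2 ≤ R ^ 2 * ∑ i, (x i) ^ 2)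
    (h : ℝ) (hh : 0 < h)
    -- `β_k = min{ xᵀ·((1/h)∫_{kh}^{(k+1)h} G)·x : ‖x‖ = 1, Σᵢ xᵢ = 0 }`
    (β : ℕ → ℝ)
    (hβ : ∀ k : ℕ, β k =
      sInf {y : ℝ | ∃ x : Fin m → ℝ, (∑ i, x i ^ 2) = 1 ∧ (∑ i, x i) = 0 ∧
        y = x ⬝ᵥ (Matrix.of fun i j =>
          (1 / h) * ∫ τ in ((k : ℝ) * h)..(((k : ℝ) + 1) * h), G τ i j).mulVec x})
    -- `Σ_{k=0}^∞ β_k = ∞`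
    (hdiv : Filter.Tendsto (fun N => ∑ k ∈ Finset.range N, β k)
      Filter.atTop Filter.atTop)
    (x : ℝ → Fin m → ℝ)
    (hx : ∀ (i : Fin m) (t : ℝ), 0 ≤ t →
      HasDerivAt (fun s => x s i) (-((G t).mulVec (x t) i)) t) :
    ∀ i j : Fin m, Filter.Tendsto (fun t => x t i - x t j)
      Filter.atTop (nhds 0) := by
  have hG : ∀ t ∈ Ici (0 : ℝ), (G t).PosSemidef := fun t ht =>
    .of_dotProduct_mulVec_nonneg (isHermitian_iff_isSymm.2 (hsym t ht)) (by simpa using hpsd t ht)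
  have hGcont : ContinuousOn G (Ici 0) := continuousOn_pi.2 fun i => continuousOn_pi.2 (hGc i)
  set y : ℝ → Fin m → ℝ := fun t i => x t i - (∑ j, x t j) / Fintype.card (Fin m)
  set V : ℝ → ℝ := fun t => ∑ i, y t i ^ 2
  have hy : SolvesOn G y (Ici 0) := SolvesOn.sub_mean hx hrow fun t ht j => by
    simpa only [(hsym t ht).apply] using hrow t ht j
  have hwin (k : ℕ) : Icc ((k : ℝ) * h) ((k + 1) * h) ⊆ Ici 0 := fun t ht =>
    (show (0 : ℝ) ≤ k * h by positivity).trans ht.1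
  have hle (k : ℕ) : (k : ℝ) * h ≤ (k + 1) * h := by nlinarith
  have hβ' (k : ℕ) : β k = algebraicConnectivity (intervalAverage G (k * h) ((k + 1) * h)) := by
    rw [hβ k, algebraicConnectivity, intervalAverage, show ((k : ℝ) + 1) * h - k * h = h by ring]
  have hstep (k : ℕ) : β k * V (k * h) ≤
      (1 + R ^ 2 * h ^ 2) / h * (V (k * h) - V ((k + 1 : ℕ) * h)) := by
    have := (hy.mono (hwin k)).algebraicConnectivity_intervalAverage_mul_le (hle k)
      (hGcont.mono (hwin k)) (fun t ht => hG t (hwin k ht)) hR (fun t ht => hnorm t (hwin k ht))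
      (sum_sub_sum_div_card (x (k * h)))
    rwa [← hβ', show ((k : ℝ) + 1) * h - k * h = h by ring, ← Nat.cast_succ] at this
  have hβ0 (k : ℕ) : 0 ≤ β k := (hβ' k).symm ▸ algebraicConnectivity_nonneg
    (dotProduct_mulVec_intervalAverage_nonneg (hle k) (hGcont.mono (hwin k))
      fun t ht => hG t (hwin k ht))
  have hV : Tendsto V atTop (𝓝 0) :=
    tendsto_zero_of_antitoneOn_of_mul_le_sub hh.le (hy.antitoneOn_sum_sq (convex_Ici 0) hG)
      (fun t _ => by positivity) hβ0 (by positivity) hstep hdiv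
  intro i j
  have hyi := tendsto_apply_of_tendsto_sum_sq hV
  simpa [y] using (hyi i).sub (hyi j)

theorem stmt7
    (m : ℕ) (hm : 1 ≤ m) (R : ℝ) (hR : 0 ≤ R)
    (G : ℝ → Matrix (Fin m) (Fin m) ℝ)
    (hGc : ∀ i j, ContinuousOn (fun t => G t i j) (Set.Ici 0))
    (hsym : ∀ t, 0 ≤ t → (G t).IsSymm)
    (hpsd : ∀ t, 0 ≤ t → ∀ x : Fin m → ℝ, 0 ≤ x ⬝ᵥ (G t).mulVec x)
    (hrow : ∀ t, 0 ≤ t → ∀ i, ∑ j, G t i j = 0)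
    -- operator norm bound `‖G(t)‖ ≤ R` (Euclidean operator norm)
    (hnorm : ∀ t, 0 ≤ t → ∀ x : Fin m → ℝ,
      ∑ i, ((G t).mulVec x i) ^ 2 ≤ R ^ 2 * ∑ i, (x i) ^ 2)
    (h : ℝ) (hh : 0 < h)
    -- `β_k = min{ xᵀ·((1/h)∫_{kh}^{(k+1)h} G)·x : ‖x‖ = 1, Σᵢ xᵢ = 0 }`
    (β : ℕ → ℝ)
    (hβ : ∀ k : ℕ, β k =
      sInf {y : ℝ | ∃ x : Fin m → ℝ, (∑ i, x i ^ 2) = 1 ∧ (∑ i, x i) = 0 ∧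
        y = x ⬝ᵥ (Matrix.of fun i j =>
          (1 / h) * ∫ τ in ((k : ℝ) * h)..(((k : ℝ) + 1) * h), G τ i j).mulVec x})
    -- `Σ_{k=0}^∞ β_k = ∞`
    (hdiv : Filter.Tendsto (fun N => ∑ k ∈ Finset.range N, β k)
      Filter.atTop Filter.atTop)
    (x : ℝ → Fin m → ℝ)
    (hx : ∀ (i : Fin m) (t : ℝ), 0 ≤ t →
      HasDerivAt (fun s => x s i) (-((G t).mulVec (x t) i)) t) :
    ∀ i j : Fin m, Filter.Tendsto (fun t => x t i - x t j)
      Filter.atTop (nhds 0) :=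
  stmt7_general m R hR G hGc hsym hpsd hrow hnorm h hh β hβ hdiv x hx
end

section
/- Let n ≥ 1, h > 0, R > 0, and let C : [0,h] → ℝ^{n×n} be continuous with C(s) symmetric, positive semidefinite, and ‖C(s)‖ ≤ R (operator norm) for all s ∈ [0,h]. Let β be the smallest eigenvalue of the symmetric matrix (1/h)∫_0^h C(s) ds. Then every solution z : [0,h] → ℝ^n of ż = −C(t)z satisfies ‖z(h)‖² ≤ (1 − hβ/(1+Rh)²)·‖z(0)‖². -/
/-!
Write `ψ(s) = z(s) ⬝ C(s) z(s)`. Since `d/ds ‖z‖² = -2ψ`, we have `‖z(h)‖² = ‖z(0)‖² - 2∫₀ʰ ψ`,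
so it suffices to show `hβ‖z(0)‖² ≤ ∫₀ʰ z(0) ⬝ C(s) z(0) ds ≤ (1 + Rh)² ∫₀ʰ ψ`. The first
inequality is the Rayleigh bound for the averaged matrix. For the second, split
`z(0) = z(s) + (z(0) - z(s))` and apply Young's inequality with weight `Rh` to the form of
`C(s)`; the error is controlled by `‖z(0) - z(s)‖² ≤ h ∫₀ʰ ‖Cz‖² ≤ hR ∫₀ʰ ψ`, by Cauchy–Schwarz
and `‖Cx‖² ≤ R (x ⬝ Cx)` for `0 ≤ C` with `‖C‖ ≤ R`.
-/

open Matrix Set MeasureTheory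

namespace Matrix

lemma PosSemidef.isSymm {ι : Type*} {M : Matrix ι ι ℝ} (hM : M.PosSemidef) : M.IsSymm :=
  isHermitian_iff_isSymm.1 hM.isHermitian

variable {ι : Type*} [Fintype ι] {M : Matrix ι ι ℝ} {R : ℝ}

lemma dotProduct_self_eq_sum_sq (x : ι → ℝ) : x ⬝ᵥ x = ∑ i, x i ^ 2 := by
  simp only [dotProduct, sq]

lemma sq_dotProduct_le (x y : ι → ℝ) : (x ⬝ᵥ y) ^ 2 ≤ (x ⬝ᵥ x) * (y ⬝ᵥ y) := by
  simpa only [dotProduct, sq] using Finset.sum_mul_sq_le_sq_mul_sq Finset.univ x y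

lemma dotProduct_mulVec_le (hR : 0 ≤ R) (hMR : ∀ x, M *ᵥ x ⬝ᵥ M *ᵥ x ≤ R ^ 2 * (x ⬝ᵥ x))
    (x : ι → ℝ) : x ⬝ᵥ M *ᵥ x ≤ R * (x ⬝ᵥ x) := by
  have hx : 0 ≤ x ⬝ᵥ x := by simpa using dotProduct_self_star_nonneg x
  refine abs_le_of_sq_le_sq' ?_ (by positivity) |>.2
  calc (x ⬝ᵥ M *ᵥ x) ^ 2 ≤ (x ⬝ᵥ x) * (M *ᵥ x ⬝ᵥ M *ᵥ x) := sq_dotProduct_le _ _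
    _ ≤ (x ⬝ᵥ x) * (R ^ 2 * (x ⬝ᵥ x)) := by gcongr; exact hMR x
    _ = (R * (x ⬝ᵥ x)) ^ 2 := by ring

lemma IsSymm.dotProduct_mulVec_comm {α : Type*} [CommSemiring α] {A : Matrix ι ι α}
    (hA : A.IsSymm) (u v : ι → α) : u ⬝ᵥ A *ᵥ v = v ⬝ᵥ A *ᵥ u := by
  rw [dotProduct_mulVec, ← mulVec_transpose, hA.eq, dotProduct_comm]

open scoped MatrixOrder in
lemma PosSemidef.mulVec_dotProduct_mulVec_le (hM : M.PosSemidef) (hR : 0 ≤ R)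
    (hMR : ∀ x, M *ᵥ x ⬝ᵥ M *ᵥ x ≤ R ^ 2 * (x ⬝ᵥ x)) (x : ι → ℝ) :
    M *ᵥ x ⬝ᵥ M *ᵥ x ≤ R * (x ⬝ᵥ M *ᵥ x) := by
  classical
  set S := CFC.sqrt M
  have hSS : S * S = M := CFC.sqrt_mul_sqrt_self M hM.nonneg
  have hquad (y : ι → ℝ) : y ⬝ᵥ M *ᵥ y = S *ᵥ y ⬝ᵥ S *ᵥ y := by
    rw [← hSS, ← mulVec_mulVec, (CFC.sqrt_nonneg M).posSemidef.isSymm.dotProduct_mulVec_comm]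
  calc M *ᵥ x ⬝ᵥ M *ᵥ x = S *ᵥ x ⬝ᵥ M *ᵥ (S *ᵥ x) := by
        rw [hquad, mulVec_mulVec, hSS]
    _ ≤ R * (S *ᵥ x ⬝ᵥ S *ᵥ x) := dotProduct_mulVec_le hR hMR _
    _ = R * (x ⬝ᵥ M *ᵥ x) := by rw [hquad]

lemma dotProduct_integral_mulVec {C : ℝ → Matrix ι ι ℝ} {a b : ℝ}
    (hC : ∀ i j, IntervalIntegrable (fun s => C s i j) volume a b) (c : ℝ)
    (x : ι → ℝ) :
    x ⬝ᵥ (of fun i j => c * ∫ s in a..b, C s i j) *ᵥ x = c * ∫ s in a..b, x ⬝ᵥ C s *ᵥ x := by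
  have hint (i j) : IntervalIntegrable (fun s => x i * (C s i j * x j)) volume a b :=
    ((hC i j).mul_const _).const_mul _
  simp only [dotProduct, mulVec, of_apply, Finset.mul_sum]
  rw [intervalIntegral.integral_finsetSum (f := fun i s => ∑ j, x i * (C s i j * x j))
    fun i _ => by simpa only [Finset.sum_fn] using IntervalIntegrable.sum _ fun j _ => hint i j,
    Finset.mul_sum]
  refine Finset.sum_congr rfl fun i _ => ?_
  rw [intervalIntegral.integral_finsetSum (f := fun j s => x i * (C s i j * x j))
    fun j _ => hint i j, Finset.mul_sum]
  refine Finset.sum_congr rfl fun j _ => ?_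
  rw [intervalIntegral.integral_const_mul, intervalIntegral.integral_mul_const]
  ring

lemma PosSemidef.dotProduct_mulVec_add_le (hM : M.PosSemidef) {L : ℝ} (hL : 0 < L)
    (u e : ι → ℝ) :
    (u + e) ⬝ᵥ M *ᵥ (u + e) ≤ (1 + L) * (u ⬝ᵥ M *ᵥ u) + (1 + 1 / L) * (e ⬝ᵥ M *ᵥ e) := by
  have hnonneg : 0 ≤ (L • u - e) ⬝ᵥ M *ᵥ (L • u - e) := by
    simpa using hM.dotProduct_mulVec_nonneg (L • u - e)
  simp only [mulVec_add, mulVec_sub, mulVec_smul, add_dotProduct, dotProduct_add,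
    sub_dotProduct, dotProduct_sub, smul_dotProduct, dotProduct_smul, smul_eq_mul,
    hM.isSymm.dotProduct_mulVec_comm e u] at hnonneg ⊢
  have hcross : 2 * (u ⬝ᵥ M *ᵥ e) ≤ L * (u ⬝ᵥ M *ᵥ u) + e ⬝ᵥ M *ᵥ e / L := by
    rw [← sub_nonneg]
    refine (div_nonneg hnonneg hL.le).trans_eq ?_
    field_simp
    ring
  linarith [show (1 + 1 / L) * (e ⬝ᵥ M *ᵥ e) = e ⬝ᵥ M *ᵥ e + e ⬝ᵥ M *ᵥ e / L by ring]

lemma sInf_unitSphere_quadForm_mul_le {A : Matrix ι ι ℝ} (hA : ∀ x, 0 ≤ x ⬝ᵥ A *ᵥ x)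
    (x : ι → ℝ) :
    sInf {y : ℝ | ∃ x : ι → ℝ, (∑ i, x i ^ 2) = 1 ∧ y = x ⬝ᵥ A *ᵥ x} * (x ⬝ᵥ x) ≤
      x ⬝ᵥ A *ᵥ x := by
  set S := {y : ℝ | ∃ x : ι → ℝ, (∑ i, x i ^ 2) = 1 ∧ y = x ⬝ᵥ A *ᵥ x}
  rcases eq_or_ne x 0 with rfl | hx
  · simp
  have hpos : 0 < x ⬝ᵥ x := by simpa using dotProduct_self_star_pos_iff.2 hx
  set c := √(x ⬝ᵥ x)
  have hc : c ^ 2 = x ⬝ᵥ x := Real.sq_sqrt hpos.le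
  have hc0 : c ≠ 0 := (Real.sqrt_pos.2 hpos).ne'
  have hunit : ∑ i, (c⁻¹ • x) i ^ 2 = 1 := by
    rw [← dotProduct_self_eq_sum_sq, smul_dotProduct, dotProduct_smul, ← hc, smul_eq_mul,
      smul_eq_mul]
    field_simp
  have hbdd : BddBelow S := ⟨0, by rintro y ⟨x, -, rfl⟩; exact hA x⟩
  calc sInf S * (x ⬝ᵥ x) ≤ (c⁻¹ • x ⬝ᵥ A *ᵥ (c⁻¹ • x)) * (x ⬝ᵥ x) := by
        gcongr; exact csInf_le hbdd ⟨_, hunit, rfl⟩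
    _ = x ⬝ᵥ A *ᵥ x := by
        rw [mulVec_smul, smul_dotProduct, dotProduct_smul, smul_eq_mul, smul_eq_mul, ← hc]
        field_simp

end Matrix

lemma sq_intervalIntegral_le {g : ℝ → ℝ} {a b : ℝ} (hab : a ≤ b)
    (hg : IntervalIntegrable g volume a b)
    (hg2 : IntervalIntegrable (fun s => g s ^ 2) volume a b) :
    (∫ s in a..b, g s) ^ 2 ≤ (b - a) * ∫ s in a..b, g s ^ 2 := by
  set I := ∫ s in a..b, g s
  set Q := ∫ s in a..b, g s ^ 2
  rcases hab.eq_or_lt with rfl | hlt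
  · simp [I]
  have hc : 0 < b - a := sub_pos.2 hlt
  have hexp : ∫ s in a..b, ((b - a) * g s - I) ^ 2 = (b - a) * ((b - a) * Q - I ^ 2) := by
    have h1 := (hg2.const_mul ((b - a) ^ 2)).sub (hg.const_mul (2 * (b - a) * I))
    simp_rw [show ∀ s, ((b - a) * g s - I) ^ 2
        = (b - a) ^ 2 * g s ^ 2 - 2 * (b - a) * I * g s + I ^ 2 from fun s => by ring]
    rw [intervalIntegral.integral_add h1 intervalIntegrable_const,
      intervalIntegral.integral_sub (hg2.const_mul _) (hg.const_mul _),
      intervalIntegral.integral_const_mul, intervalIntegral.integral_const_mul,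
      intervalIntegral.integral_const, smul_eq_mul]
    ring
  have hnonneg : 0 ≤ ∫ s in a..b, ((b - a) * g s - I) ^ 2 :=
    intervalIntegral.integral_nonneg hab fun s _ => sq_nonneg _
  rw [hexp] at hnonneg
  nlinarith [(mul_nonneg_iff_of_pos_left hc).1 hnonneg]

theorem integral_eq_sub_of_hasDerivWithinAt_Icc {E : Type*} [NormedAddCommGroup E]
    [NormedSpace ℝ E] [CompleteSpace E] {f f' : ℝ → E} {a b : ℝ} (hab : a ≤ b)
    (hf : ∀ x ∈ Icc a b, HasDerivWithinAt f (f' x) (Icc a b) x)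
    (hf' : IntervalIntegrable f' volume a b) :
    ∫ x in a..b, f' x = f b - f a :=
  intervalIntegral.integral_eq_sub_of_hasDeriv_right_of_le hab
    (fun x hx => (hf x hx).continuousWithinAt)
    (fun x hx => ((hf x (Ioo_subset_Icc_self hx)).hasDerivAt
      (Icc_mem_nhds hx.1 hx.2)).hasDerivWithinAt) hf'

section LinearODE

variable {ι : Type*} [Fintype ι] {C : ℝ → Matrix ι ι ℝ} {z : ℝ → ι → ℝ} {h : ℝ}

lemma continuousOn_mulVec_apply {S : Set ℝ} (hC : ∀ i j, ContinuousOn (fun s => C s i j) S)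
    (hz : ∀ j, ContinuousOn (fun s => z s j) S) (i : ι) :
    ContinuousOn (fun s => (C s *ᵥ z s) i) S :=
  continuousOn_finsetSum _ fun j _ => (hC i j).mul (hz j)

lemma continuousOn_dotProduct {S : Set ℝ} {x y : ℝ → ι → ℝ}
    (hx : ∀ i, ContinuousOn (fun s => x s i) S) (hy : ∀ i, ContinuousOn (fun s => y s i) S) :
    ContinuousOn (fun s => x s ⬝ᵥ y s) S :=
  continuousOn_finsetSum _ fun i _ => (hx i).mul (hy i)

lemma sub_eq_integral_of_hasDerivWithinAt
    (hz : ∀ i, ∀ t ∈ Icc 0 h, HasDerivWithinAt (fun s => z s i) (-(C t *ᵥ z t) i) (Icc 0 h) t)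
    (hCz : ∀ i, ContinuousOn (fun s => (C s *ᵥ z s) i) (Icc 0 h))
    {t : ℝ} (ht : t ∈ Icc 0 h) (i : ι) :
    z 0 i - z t i = ∫ s in 0..t, (C s *ᵥ z s) i := by
  have hsub : Icc 0 t ⊆ Icc 0 h := Icc_subset_Icc_right ht.2
  have := integral_eq_sub_of_hasDerivWithinAt_Icc ht.1
    (fun s hs => (hz i s (hsub hs)).mono hsub)
    (((hCz i).mono hsub).intervalIntegrable_of_Icc ht.1).neg
  rw [intervalIntegral.integral_neg] at this
  linarith

lemma dotProduct_self_eq_sub_integral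
    (hh : 0 ≤ h)
    (hz : ∀ i, ∀ t ∈ Icc 0 h, HasDerivWithinAt (fun s => z s i) (-(C t *ᵥ z t) i) (Icc 0 h) t)
    (hCz : ∀ i, ContinuousOn (fun s => (C s *ᵥ z s) i) (Icc 0 h)) :
    z h ⬝ᵥ z h = z 0 ⬝ᵥ z 0 - 2 * ∫ s in 0..h, z s ⬝ᵥ C s *ᵥ z s := by
  have hzc (i) : ContinuousOn (fun s => z s i) (Icc 0 h) := fun t ht =>
    (hz i t ht).continuousWithinAt
  have hderiv : ∀ t ∈ Icc 0 h, HasDerivWithinAt (fun s => z s ⬝ᵥ z s)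
      (-2 * (z t ⬝ᵥ C t *ᵥ z t)) (Icc 0 h) t := by
    intro t ht
    refine (HasDerivWithinAt.fun_sum (u := Finset.univ) (A := fun i s => z s i * z s i)
      fun i _ => (hz i t ht).mul (hz i t ht)).congr_deriv ?_
    simp only [dotProduct, Finset.mul_sum]
    exact Finset.sum_congr rfl fun i _ => by ring
  have := integral_eq_sub_of_hasDerivWithinAt_Icc hh hderiv
    (((continuousOn_dotProduct hzc hCz).intervalIntegrable_of_Icc hh).const_mul (-2))
  rw [intervalIntegral.integral_const_mul] at this
  linarith

lemma dist_sq_le_integral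
    (hh : 0 ≤ h)
    (hz : ∀ i, ∀ t ∈ Icc 0 h, HasDerivWithinAt (fun s => z s i) (-(C t *ᵥ z t) i) (Icc 0 h) t)
    (hCz : ∀ i, ContinuousOn (fun s => (C s *ᵥ z s) i) (Icc 0 h))
    {t : ℝ} (ht : t ∈ Icc 0 h) :
    (z 0 - z t) ⬝ᵥ (z 0 - z t) ≤ h * ∫ s in 0..h, C s *ᵥ z s ⬝ᵥ C s *ᵥ z s := by
  have hint (i) {a b : ℝ} (ha : 0 ≤ a) (hab : a ≤ b) (hb : b ≤ h) :
      IntervalIntegrable (fun s => (C s *ᵥ z s) i ^ 2) volume a b :=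
    (((hCz i).pow 2).mono (Icc_subset_Icc ha hb)).intervalIntegrable_of_Icc hab
  have hcoord (i) : (z 0 i - z t i) ^ 2 ≤ h * ∫ s in 0..h, (C s *ᵥ z s) i ^ 2 := by
    rw [sub_eq_integral_of_hasDerivWithinAt hz hCz ht]
    calc (∫ s in 0..t, (C s *ᵥ z s) i) ^ 2 ≤ (t - 0) * ∫ s in 0..t, (C s *ᵥ z s) i ^ 2 :=
          sq_intervalIntegral_le ht.1
            (((hCz i).mono (Icc_subset_Icc_right ht.2)).intervalIntegrable_of_Icc ht.1)
            (hint i le_rfl ht.1 ht.2)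
      _ ≤ h * ∫ s in 0..h, (C s *ᵥ z s) i ^ 2 := by
          rw [sub_zero]
          refine mul_le_mul ht.2 ?_
            (intervalIntegral.integral_nonneg ht.1 fun s _ => sq_nonneg _) hh
          exact intervalIntegral.integral_mono_interval le_rfl ht.1 ht.2
            (Filter.Eventually.of_forall fun s => sq_nonneg _) (hint i le_rfl hh le_rfl)
  calc (z 0 - z t) ⬝ᵥ (z 0 - z t) ≤ ∑ i, h * ∫ s in 0..h, (C s *ᵥ z s) i ^ 2 := by
        simp only [dotProduct, Pi.sub_apply, ← sq]
        exact Finset.sum_le_sum fun i _ => hcoord i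
    _ = h * ∫ s in 0..h, C s *ᵥ z s ⬝ᵥ C s *ᵥ z s := by
        rw [← Finset.mul_sum,
          ← intervalIntegral.integral_finsetSum fun i _ => hint i le_rfl hh le_rfl]
        simp only [dotProduct, sq]

lemma integral_quadForm_initial_le {R : ℝ} (hh : 0 < h) (hR : 0 < R)
    (hC : ∀ i j, ContinuousOn (fun s => C s i j) (Icc 0 h))
    (hz : ∀ i, ∀ t ∈ Icc 0 h, HasDerivWithinAt (fun s => z s i) (-(C t *ᵥ z t) i) (Icc 0 h) t)
    (hpsd : ∀ s ∈ Icc 0 h, (C s).PosSemidef)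
    (hnorm : ∀ s ∈ Icc 0 h, ∀ x, C s *ᵥ x ⬝ᵥ C s *ᵥ x ≤ R ^ 2 * (x ⬝ᵥ x)) :
    ∫ s in 0..h, z 0 ⬝ᵥ C s *ᵥ z 0 ≤ (1 + R * h) ^ 2 * ∫ s in 0..h, z s ⬝ᵥ C s *ᵥ z s := by
  have hzc (i) : ContinuousOn (fun s => z s i) (Icc 0 h) := fun t ht =>
    (hz i t ht).continuousWithinAt
  have hCz := continuousOn_mulVec_apply hC hzc
  have hψ := (continuousOn_dotProduct hzc hCz).intervalIntegrable_of_Icc (μ := volume) hh.le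
  set I := ∫ s in 0..h, z s ⬝ᵥ C s *ᵥ z s
  have hJ : ∫ s in 0..h, C s *ᵥ z s ⬝ᵥ C s *ᵥ z s ≤ R * I := by
    rw [← intervalIntegral.integral_const_mul]
    exact intervalIntegral.integral_mono_on hh.le
      ((continuousOn_dotProduct hCz hCz).intervalIntegrable_of_Icc (μ := volume) hh.le)
      (hψ.const_mul R)
      fun s hs => (hpsd s hs).mulVec_dotProduct_mulVec_le hR.le (hnorm s hs) (z s)
  have hpoint : ∀ s ∈ Icc 0 h, z 0 ⬝ᵥ C s *ᵥ z 0 ≤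
      (1 + R * h) * (z s ⬝ᵥ C s *ᵥ z s) + (1 + 1 / (R * h)) * (R * (h * (R * I))) := by
    intro s hs
    have hsplit := (hpsd s hs).dotProduct_mulVec_add_le (mul_pos hR hh) (z s) (z 0 - z s)
    rw [add_sub_cancel] at hsplit
    have hrest : (z 0 - z s) ⬝ᵥ C s *ᵥ (z 0 - z s) ≤ R * (h * (R * I)) :=
      calc (z 0 - z s) ⬝ᵥ C s *ᵥ (z 0 - z s) ≤ R * ((z 0 - z s) ⬝ᵥ (z 0 - z s)) :=
            dotProduct_mulVec_le hR.le (hnorm s hs) _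
        _ ≤ R * (h * (R * I)) := by
            gcongr
            exact (dist_sq_le_integral hh.le hz hCz hs).trans (by gcongr)
    refine hsplit.trans ?_
    gcongr
  have hφ := (continuousOn_dotProduct (x := fun _ => z 0) (fun _ => continuousOn_const)
    (continuousOn_mulVec_apply (z := fun _ => z 0) hC fun _ => continuousOn_const))
  have hmono := intervalIntegral.integral_mono_on hh.le
    (hφ.intervalIntegrable_of_Icc (μ := volume) hh.le)
    ((hψ.const_mul _).add intervalIntegrable_const) hpoint
  rw [intervalIntegral.integral_add (hψ.const_mul _) intervalIntegrable_const,
    intervalIntegral.integral_const_mul, intervalIntegral.integral_const, smul_eq_mul] at hmono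
  refine hmono.trans_eq ?_
  field_simp
  ring

lemma mul_sInf_unitSphere_average_mul_le (hh : 0 < h)
    (hC : ∀ i j, IntervalIntegrable (fun s => C s i j) volume 0 h)
    (hpsd : ∀ s ∈ Icc 0 h, ∀ x, 0 ≤ x ⬝ᵥ C s *ᵥ x) (x : ι → ℝ) :
    h * sInf {y : ℝ | ∃ x : ι → ℝ, (∑ i, x i ^ 2) = 1 ∧
      y = x ⬝ᵥ (of fun i j => (1 / h) * ∫ s in (0:ℝ)..h, C s i j) *ᵥ x} * (x ⬝ᵥ x) ≤
      ∫ s in 0..h, x ⬝ᵥ C s *ᵥ x := by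
  have hint (x : ι → ℝ) : 0 ≤ ∫ s in 0..h, x ⬝ᵥ C s *ᵥ x :=
    intervalIntegral.integral_nonneg hh.le fun s hs => hpsd s hs x
  have hmin := sInf_unitSphere_quadForm_mul_le
    (A := of fun i j => (1 / h) * ∫ s in (0:ℝ)..h, C s i j) (fun y => by
      rw [dotProduct_integral_mulVec hC]; exact mul_nonneg (by positivity) (hint y)) x
  rw [dotProduct_integral_mulVec hC] at hmin
  calc _ = h * (_ * (x ⬝ᵥ x)) := mul_assoc _ _ _
    _ ≤ h * (1 / h * ∫ s in 0..h, x ⬝ᵥ C s *ᵥ x) := by gcongr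
    _ = ∫ s in 0..h, x ⬝ᵥ C s *ᵥ x := by field_simp

end LinearODE

theorem stmt9_general
    (n : ℕ) (h R : ℝ) (hh : 0 < h) (hR : 0 < R)
    (C : ℝ → Matrix (Fin n) (Fin n) ℝ)
    (hCc : ∀ i j, ContinuousOn (fun s => C s i j) (Set.Icc 0 h))
    (hsym : ∀ s ∈ Set.Icc (0 : ℝ) h, (C s).IsSymm)
    (hpsd : ∀ s ∈ Set.Icc (0 : ℝ) h, ∀ x : Fin n → ℝ, 0 ≤ x ⬝ᵥ (C s).mulVec x)
    -- operator norm bound `‖C(s)‖ ≤ R` (Euclidean operator norm)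
    (hnorm : ∀ s ∈ Set.Icc (0 : ℝ) h, ∀ x : Fin n → ℝ,
      ∑ i, ((C s).mulVec x i) ^ 2 ≤ R ^ 2 * ∑ i, (x i) ^ 2)
    -- `β` is the smallest eigenvalue of `(1/h)∫₀ʰ C(s) ds`, expressed as the
    -- minimum of its Rayleigh quotient over Euclidean unit vectors
    (β : ℝ)
    (hβ : β = sInf {y : ℝ | ∃ x : Fin n → ℝ, (∑ i, x i ^ 2) = 1 ∧
      y = x ⬝ᵥ (Matrix.of fun i j => (1 / h) * ∫ s in (0:ℝ)..h, C s i j).mulVec x})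
    (z : ℝ → Fin n → ℝ)
    (hz : ∀ (i : Fin n), ∀ t ∈ Set.Icc (0 : ℝ) h,
      HasDerivWithinAt (fun s => z s i) (-((C t).mulVec (z t) i))
        (Set.Icc 0 h) t) :
    ∑ i, (z h i) ^ 2 ≤ (1 - h * β / (1 + R * h) ^ 2) * ∑ i, (z 0 i) ^ 2 := by
  have hCpsd : ∀ s ∈ Icc 0 h, (C s).PosSemidef := fun s hs =>
    .of_dotProduct_mulVec_nonneg (isHermitian_iff_isSymm.2 (hsym s hs)) fun x => by
      simpa using hpsd s hs x
  have hCnorm : ∀ s ∈ Icc 0 h, ∀ x, C s *ᵥ x ⬝ᵥ C s *ᵥ x ≤ R ^ 2 * (x ⬝ᵥ x) := by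
    simpa only [dotProduct_self_eq_sum_sq] using hnorm
  have hCint (i j) := (hCc i j).intervalIntegrable_of_Icc (μ := volume) hh.le
  have hβle := hβ ▸ mul_sInf_unitSphere_average_mul_le hh hCint hpsd (z 0)
  have henergy := integral_quadForm_initial_le hh hR hCc hz hCpsd hCnorm
  have hI0 : 0 ≤ ∫ s in 0..h, z s ⬝ᵥ C s *ᵥ z s :=
    intervalIntegral.integral_nonneg hh.le fun s hs => hpsd s hs (z s)
  have hdecay : h * β * (z 0 ⬝ᵥ z 0) / (1 + R * h) ^ 2 ≤ ∫ s in 0..h, z s ⬝ᵥ C s *ᵥ z s := by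
    rw [div_le_iff₀ (by positivity), mul_comm _ ((1 + R * h) ^ 2)]
    exact hβle.trans henergy
  rw [← dotProduct_self_eq_sum_sq, ← dotProduct_self_eq_sum_sq,
    dotProduct_self_eq_sub_integral hh.le hz
      (continuousOn_mulVec_apply hCc fun i t ht => (hz i t ht).continuousWithinAt)]
  linarith [show (1 - h * β / (1 + R * h) ^ 2) * (z 0 ⬝ᵥ z 0)
    = z 0 ⬝ᵥ z 0 - h * β * (z 0 ⬝ᵥ z 0) / (1 + R * h) ^ 2 by ring]

theorem stmt9
    (n : ℕ) (hn : 1 ≤ n) (h R : ℝ) (hh : 0 < h) (hR : 0 < R)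
    (C : ℝ → Matrix (Fin n) (Fin n) ℝ)
    (hCc : ∀ i j, ContinuousOn (fun s => C s i j) (Set.Icc 0 h))
    (hsym : ∀ s ∈ Set.Icc (0 : ℝ) h, (C s).IsSymm)
    (hpsd : ∀ s ∈ Set.Icc (0 : ℝ) h, ∀ x : Fin n → ℝ, 0 ≤ x ⬝ᵥ (C s).mulVec x)
    -- operator norm bound `‖C(s)‖ ≤ R` (Euclidean operator norm)
    (hnorm : ∀ s ∈ Set.Icc (0 : ℝ) h, ∀ x : Fin n → ℝ,
      ∑ i, ((C s).mulVec x i) ^ 2 ≤ R ^ 2 * ∑ i, (x i) ^ 2)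
    -- `β` is the smallest eigenvalue of `(1/h)∫₀ʰ C(s) ds`, expressed as the
    -- minimum of its Rayleigh quotient over Euclidean unit vectors
    (β : ℝ)
    (hβ : β = sInf {y : ℝ | ∃ x : Fin n → ℝ, (∑ i, x i ^ 2) = 1 ∧
      y = x ⬝ᵥ (Matrix.of fun i j => (1 / h) * ∫ s in (0:ℝ)..h, C s i j).mulVec x})
    (z : ℝ → Fin n → ℝ)
    (hz : ∀ (i : Fin n), ∀ t ∈ Set.Icc (0 : ℝ) h,
      HasDerivWithinAt (fun s => z s i) (-((C t).mulVec (z t) i))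
        (Set.Icc 0 h) t) :
    ∑ i, (z h i) ^ 2 ≤ (1 - h * β / (1 + R * h) ^ 2) * ∑ i, (z 0 i) ^ 2 :=
  stmt9_general n h R hh hR C hCc hsym hpsd hnorm β hβ z hz
end

section
/- Let Y ∈ ℝ^{m×m} be a matrix such that 0 is a simple eigenvalue of Y (algebraic multiplicity one) and every nonzero eigenvalue of Y has negative real part. Let z : [0,∞) → ℝ^m be continuous, bounded, and T-periodic with ∫_0^T z(s) ds = 0. Then every solution Φ : [0,∞) → ℝ^m of Φ̇ = z(t) + Y·Φ is bounded on [0,∞): there exists U > 0 with ‖Φ(t)‖ ≤ U for all t ≥ 0. -/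
open scoped BigOperators
open Matrix

/-!
The hypotheses say that the characteristic polynomial of `Y` is `X * q` with `q 0 ≠ 0` and all
complex roots of `q` in the open left half-plane. A Bézout identity `a * X + b * q = 1` yields
complementary projections `E = b(Y) q(Y)` and `F = a(Y) Y` with `Y E = 0`, so `exp (t Y) E = E`,
while `q(Y) F = 0` makes `exp (t Y) F` decay exponentially (induction on the linear factors of `q`).
In the variation of constants formula `Φ t = exp (t Y) Φ 0 + ∫₀ᵗ exp ((t - s) Y) z s ds` the
`E`-part is `E (Φ 0 + ∫₀ᵗ z)`, bounded since `z` has mean zero over a period, and the `F`-part is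
a convolution of the bounded `z` with an integrable kernel.
-/

open Polynomial NormedSpace

lemma norm_integral_le_of_norm_le_exp {E : Type*} [NormedAddCommGroup E] [NormedSpace ℝ E]
    {f : ℝ → E} {C c t : ℝ} (hc : 0 < c) (ht : 0 ≤ t)
    (hf : ∀ s ∈ Set.Icc 0 t, ‖f s‖ ≤ C * Real.exp (c * s)) :
    ‖∫ s in 0..t, f s‖ ≤ C * Real.exp (c * t) / c := by
  have hC : 0 ≤ C := by simpa using (norm_nonneg _).trans (hf 0 ⟨le_rfl, ht⟩)
  calc ‖∫ s in 0..t, f s‖ ≤ ∫ s in 0..t, C * Real.exp (c * s) :=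
        intervalIntegral.norm_integral_le_of_norm_le ht
          (Filter.Eventually.of_forall fun s hs => hf s (Set.Ioc_subset_Icc_self hs))
          ((by fun_prop : Continuous fun s => C * Real.exp (c * s)).intervalIntegrable _ _)
    _ = C * (Real.exp (c * t) - 1) / c := by
        rw [intervalIntegral.integral_const_mul, intervalIntegral.integral_comp_mul_left _ hc.ne',
          integral_exp]
        simp [div_eq_mul_inv, mul_comm, mul_left_comm]
    _ ≤ C * Real.exp (c * t) / c := by gcongr; linarith

section ComplexBanachAlgebra

variable {𝔸 : Type*} [NormedRing 𝔸] [NormedAlgebra ℂ 𝔸] [CompleteSpace 𝔸]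

lemma hasDerivAt_exp_ofReal_smul (a : 𝔸) (s : ℝ) :
    HasDerivAt (fun r : ℝ => exp ((r : ℂ) • a)) (exp ((s : ℂ) • a) * a) s := by
  have h := (hasDerivAt_exp_smul_const a (s : ℂ)).scomp s Complex.ofRealCLM.hasDerivAt
  rwa [Complex.ofRealCLM_apply, Complex.ofReal_one, one_smul] at h

lemma hasDerivAt_cexp_neg_mul_smul_exp_smul_mul (a b : 𝔸) (μ : ℂ) (s : ℝ) :
    HasDerivAt (fun r : ℝ => Complex.exp (-(μ * r)) • (exp ((r : ℂ) • a) * b))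
      (Complex.exp (-(μ * s)) • (exp ((s : ℂ) • a) * (a * b - μ • b))) s := by
  have hc : HasDerivAt (fun r : ℝ => Complex.exp (-(μ * r))) (-μ * Complex.exp (-(μ * s))) s := by
    simpa [mul_comm] using (((hasDerivAt_id (s : ℂ)).const_mul μ).neg.cexp).comp_ofReal
  refine (hc.fun_smul ((hasDerivAt_exp_ofReal_smul a s).mul_const b)).congr_deriv ?_
  simp only [mul_sub, mul_smul_comm, smul_sub, smul_smul, mul_assoc, neg_mul, neg_smul]
  rw [mul_comm μ (Complex.exp _)]
  abel

lemma exists_norm_exp_smul_mul_le_of_sub_smul {a b : 𝔸} {μ : ℂ} {β C : ℝ} (hμ : μ.re < β)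
    (hC : ∀ s : ℝ, 0 ≤ s → ‖exp ((s : ℂ) • a) * (a * b - μ • b)‖ ≤ C * Real.exp (β * s)) :
    ∃ C' : ℝ, ∀ t : ℝ, 0 ≤ t → ‖exp ((t : ℂ) • a) * b‖ ≤ C' * Real.exp (β * t) := by
  set g' : ℝ → 𝔸 := fun s => Complex.exp (-(μ * s)) • (exp ((s : ℂ) • a) * (a * b - μ • b))
  have hg := hasDerivAt_cexp_neg_mul_smul_exp_smul_mul a b μ
  have hδ : 0 < β - μ.re := sub_pos.2 hμ
  have hnorm_cexp : ∀ ν : ℂ, ∀ s : ℝ, ‖Complex.exp (ν * s)‖ = Real.exp (ν.re * s) := fun ν s => by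
    simp [Complex.norm_exp]
  have hexp_cont : Continuous fun s : ℝ => exp ((s : ℂ) • a) :=
    continuous_iff_continuousAt.2 fun s => (hasDerivAt_exp_ofReal_smul a s).continuousAt
  have hint : ∀ t, 0 ≤ t →
      ‖∫ s in 0..t, g' s‖ ≤ C * Real.exp ((β - μ.re) * t) / (β - μ.re) := by
    refine fun t ht => norm_integral_le_of_norm_le_exp hδ ht fun s hs => ?_
    rw [norm_smul, ← neg_mul, hnorm_cexp, Complex.neg_re]
    calc Real.exp (-μ.re * s) * ‖exp ((s : ℂ) • a) * (a * b - μ • b)‖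
        ≤ Real.exp (-μ.re * s) * (C * Real.exp (β * s)) := by gcongr; exact hC s hs.1
      _ = C * Real.exp ((β - μ.re) * s) := by rw [mul_left_comm, ← Real.exp_add]; ring_nf
  refine ⟨‖b‖ + C / (β - μ.re), fun t ht => ?_⟩
  have hftc : Complex.exp (-(μ * t)) • (exp ((t : ℂ) • a) * b) = b + ∫ s in 0..t, g' s := by
    rw [intervalIntegral.integral_eq_sub_of_hasDerivAt (fun s _ => hg s)
      ((by fun_prop : Continuous g').intervalIntegrable _ _)]
    simp
  have hrecover : exp ((t : ℂ) • a) * b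
      = Complex.exp (μ * t) • (Complex.exp (-(μ * t)) • (exp ((t : ℂ) • a) * b)) := by
    rw [smul_smul, ← Complex.exp_add, add_neg_cancel, Complex.exp_zero, one_smul]
  calc ‖exp ((t : ℂ) • a) * b‖
      ≤ Real.exp (μ.re * t) * (‖b‖ + C * Real.exp ((β - μ.re) * t) / (β - μ.re)) := by
        rw [hrecover, norm_smul, hnorm_cexp, hftc]
        gcongr
        exact (norm_add_le _ _).trans (add_le_add_right (hint t ht) _)
    _ = Real.exp (μ.re * t) * ‖b‖ + C / (β - μ.re) * Real.exp (β * t) := by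
        rw [mul_add, mul_div_assoc', mul_left_comm, ← Real.exp_add]; ring_nf
    _ ≤ (‖b‖ + C / (β - μ.re)) * Real.exp (β * t) := by
        rw [add_mul, mul_comm ‖b‖]
        gcongr

lemma exists_norm_exp_smul_mul_le_of_aeval_mul_eq_zero (a : 𝔸) {β : ℝ} (S : Multiset ℂ)
    (hS : ∀ μ ∈ S, μ.re < β) {b : 𝔸} (hb : aeval a (S.map fun μ => X - C μ).prod * b = 0) :
    ∃ C : ℝ, ∀ t : ℝ, 0 ≤ t → ‖exp ((t : ℂ) • a) * b‖ ≤ C * Real.exp (β * t) := by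
  induction S using Multiset.induction generalizing b with
  | empty =>
    rw [Multiset.map_zero, Multiset.prod_zero, map_one, one_mul] at hb
    exact ⟨0, fun t _ => by simp [hb]⟩
  | cons μ S ih =>
    refine (ih (fun ν hν => hS ν (Multiset.mem_cons_of_mem hν)) ?_).elim fun C hC =>
      exists_norm_exp_smul_mul_le_of_sub_smul (hS μ (Multiset.mem_cons_self μ S)) hC
    rw [Multiset.map_cons, Multiset.prod_cons, mul_comm, map_mul] at hb
    have hfactor : aeval a (X - C μ) * b = a * b - μ • b := by simp [sub_mul, Algebra.smul_def]
    rwa [← hfactor, ← mul_assoc]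

end ComplexBanachAlgebra

namespace Function.Periodic

variable {E : Type*} [NormedAddCommGroup E] {f : ℝ → E} {T : ℝ}

lemma exists_norm_le (hf : Periodic f T) (hT : T ≠ 0) (hcont : Continuous f) :
    ∃ C, ∀ t, ‖f t‖ ≤ C := by
  obtain ⟨C, hC⟩ := isBounded_iff_forall_norm_le.1 (hf.isBounded_of_continuous hT hcont)
  exact ⟨C, fun t => hC _ (Set.mem_range_self t)⟩

lemma exists_norm_integral_le [NormedSpace ℝ E] (hf : Periodic f T) (hT : T ≠ 0)
    (hcont : Continuous f) (hmean : ∫ s in 0..T, f s = 0) :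
    ∃ M, ∀ t, ‖∫ s in 0..t, f s‖ ≤ M := by
  have hint : ∀ a b : ℝ, IntervalIntegrable f MeasureTheory.volume a b :=
    hcont.intervalIntegrable
  refine Periodic.exists_norm_le (fun t => ?_) hT (intervalIntegral.continuous_primitive hint 0)
  rw [hf.intervalIntegral_add_eq_add 0 t hint, zero_add, hmean, add_zero]

end Function.Periodic

lemma Multiset.exists_neg_forall_re_lt (S : Multiset ℂ) (hS : ∀ μ ∈ S, μ.re < 0) :
    ∃ β < 0, ∀ μ ∈ S, μ.re < β := by
  have hall : ∀ᶠ β in nhdsWithin (0 : ℝ) (Set.Iio 0), ∀ μ ∈ S.toFinset, μ.re < β :=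
    (Filter.eventually_all_finset _).2 fun μ hμ =>
      nhdsWithin_le_nhds (eventually_gt_nhds (hS μ (Multiset.mem_toFinset.1 hμ)))
  obtain ⟨β, hβ, hβS⟩ := (eventually_mem_nhdsWithin.and hall).exists
  exact ⟨β, hβ, fun μ hμ => hβS μ (Multiset.mem_toFinset.2 hμ)⟩

lemma Real.sqrt_sum_sq_le {n : Type*} [Fintype n] (v : n → ℝ) :
    √(∑ i, v i ^ 2) ≤ √(Fintype.card n) * ‖v‖ := by
  rw [← Real.sqrt_sq (norm_nonneg v), ← Real.sqrt_mul (Nat.cast_nonneg _)]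
  refine Real.sqrt_le_sqrt ?_
  calc ∑ i, v i ^ 2 ≤ ∑ _i : n, ‖v‖ ^ 2 := Finset.sum_le_sum fun i _ => by
        rw [← sq_abs, ← Real.norm_eq_abs]
        exact pow_le_pow_left₀ (norm_nonneg _) (norm_le_pi_norm v i) 2
    _ = Fintype.card n * ‖v‖ ^ 2 := by simp

attribute [local instance] Matrix.linftyOpNormedAddCommGroup Matrix.linftyOpNormedRing
  Matrix.linftyOpNormedAlgebra

namespace Matrix

lemma linfty_opNorm_map_ofReal {m n : Type*} [Fintype m] [Fintype n] (M : Matrix m n ℝ) :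
    ‖M.map ((↑) : ℝ → ℂ)‖ = ‖M‖ := by
  simp [linfty_opNorm_def, Complex.nnnorm_real]

variable {n : Type*} [Fintype n] [DecidableEq n]

lemma exists_norm_exp_smul_mul_le_of_aeval_mul_eq_zero (Y : Matrix n n ℝ) {q : ℝ[X]}
    (hq : q.Monic) {β : ℝ} (hroots : ∀ μ ∈ (q.map (algebraMap ℝ ℂ)).roots, μ.re < β)
    {B : Matrix n n ℝ} (hB : aeval Y q * B = 0) :
    ∃ C : ℝ, ∀ t : ℝ, 0 ≤ t → ‖exp (t • Y) * B‖ ≤ C * Real.exp (β * t) := by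
  let φ : Matrix n n ℝ →ₐ[ℝ] Matrix n n ℂ := (Algebra.ofId ℝ ℂ).mapMatrix
  have hφ : Continuous φ := continuous_id.matrix_map Complex.continuous_ofReal
  have hq_prod : q.map (algebraMap ℝ ℂ)
      = ((q.map (algebraMap ℝ ℂ)).roots.map fun μ => X - C μ).prod :=
    (IsAlgClosed.splits _).eq_prod_roots_of_monic (hq.map _)
  obtain ⟨C, hC⟩ := _root_.exists_norm_exp_smul_mul_le_of_aeval_mul_eq_zero (φ Y) _ hroots
    (b := φ B) <| by
      rw [← hq_prod, aeval_map_algebraMap, aeval_algHom_apply, ← map_mul, hB, map_zero]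
  refine ⟨C, fun t ht => ?_⟩
  have hmap : (exp (t • Y) * B).map (↑) = exp ((t : ℂ) • φ Y) * φ B := by
    change φ (exp (t • Y) * B) = _
    rw [map_mul, Complex.coe_smul, ← map_smul]
    exact congrArg (· * φ B) (map_exp φ hφ _)
  rw [← linfty_opNorm_map_ofReal, hmap]
  exact hC t ht

theorem exists_splitting_of_rootMultiplicity_zero_eq_one (Y : Matrix n n ℝ)
    (hsimple : rootMultiplicity 0 (Y.map ((↑) : ℝ → ℂ)).charpoly = 1)
    (hneg : ∀ μ ∈ (Y.map ((↑) : ℝ → ℂ)).charpoly.roots, μ ≠ 0 → μ.re < 0) :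
    ∃ E F : Matrix n n ℝ, E + F = 1 ∧ Y * E = 0 ∧
      ∃ β < 0, ∃ C, ∀ t : ℝ, 0 ≤ t → ‖exp (t • Y) * F‖ ≤ C * Real.exp (β * t) := by
  have hchar : (Y.map ((↑) : ℝ → ℂ)).charpoly = Y.charpoly.map (algebraMap ℝ ℂ) :=
    charpoly_map Y (algebraMap ℝ ℂ)
  have hmult : rootMultiplicity 0 Y.charpoly = 1 := by
    rwa [eq_rootMultiplicity_map (algebraMap ℝ ℂ).injective, map_zero, ← hchar]
  obtain ⟨q, hYq, hXq⟩ :=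
    Y.charpoly.exists_eq_pow_rootMultiplicity_mul_and_not_dvd Y.charpoly_monic.ne_zero 0
  simp only [hmult, map_zero, sub_zero, pow_one] at hYq hXq
  have hq : q.Monic := monic_X.of_mul_monic_left (hYq ▸ Y.charpoly_monic)
  have hroots : ∀ μ ∈ (q.map (algebraMap ℝ ℂ)).roots, μ.re < 0 := by
    intro μ hμ
    refine hneg μ ?_ ?_
    · rw [hchar, hYq, Polynomial.map_mul, map_X, roots_mul, Multiset.mem_add]
      · exact Or.inr hμ
      · exact mul_ne_zero X_ne_zero (hq.map _).ne_zero
    · rintro rfl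
      refine hXq (X_dvd_iff.2 ?_)
      have := (mem_roots'.1 hμ).2
      rwa [IsRoot, eval_map_algebraMap, aeval_def, eval₂_at_zero, map_eq_zero_iff _
        (algebraMap ℝ ℂ).injective] at this
  obtain ⟨β, hβ, hβroots⟩ := Multiset.exists_neg_forall_re_lt _ hroots
  obtain ⟨a, b, hab⟩ := irreducible_X.coprime_iff_not_dvd.2 hXq
  have hann : ∀ r : ℝ[X], aeval Y (r * (X * q)) = 0 := fun r => by
    rw [← hYq, map_mul, aeval_self_charpoly, mul_zero]
  refine ⟨aeval Y (b * q), aeval Y (a * X), ?_, ?_, β, hβ,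
    Y.exists_norm_exp_smul_mul_le_of_aeval_mul_eq_zero hq hβroots ?_⟩
  · rw [← map_add, add_comm, hab, map_one]
  · have := hann b
    rwa [show b * (X * q) = X * (b * q) by ring, map_mul, aeval_X] at this
  · have := hann a
    rwa [show a * (X * q) = q * (a * X) by ring, map_mul] at this

noncomputable def mulVecL : Matrix n n ℝ →L[ℝ] (n → ℝ) →L[ℝ] n → ℝ :=
  LinearMap.toContinuousLinearMap
    (LinearMap.toContinuousLinearMap.toLinearMap ∘ₗ Matrix.toLin'.toLinearMap)

@[simp] lemma mulVecL_apply (M : Matrix n n ℝ) (v : n → ℝ) : mulVecL M v = M *ᵥ v := rfl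

lemma mulVec_intervalIntegral (M : Matrix n n ℝ) {f : ℝ → n → ℝ} {a b : ℝ}
    (hf : IntervalIntegrable f MeasureTheory.volume a b) :
    M *ᵥ ∫ s in a..b, f s = ∫ s in a..b, M *ᵥ f s :=
  ((mulVecL M).intervalIntegral_comp_comm hf).symm

lemma continuous_exp_smul (Y : Matrix n n ℝ) : Continuous fun r : ℝ => exp (r • Y) :=
  continuous_iff_continuousAt.2 fun r => (hasDerivAt_exp_smul_const Y r).continuousAt

lemma exp_smul_mul_exp_smul (Y : Matrix n n ℝ) (r s : ℝ) :
    exp (r • Y) * exp (s • Y) = exp ((r + s) • Y) := by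
  rw [add_smul, Matrix.exp_add_of_commute _ _ (((Commute.refl Y).smul_left r).smul_right s)]

theorem eq_exp_smul_mulVec_add_integral (Y : Matrix n n ℝ) {x g : ℝ → n → ℝ} (hg : Continuous g)
    (hx : ∀ t, 0 ≤ t → HasDerivAt x (g t + Y *ᵥ x t) t) {t : ℝ} (ht : 0 ≤ t) :
    x t = exp (t • Y) *ᵥ x 0 + ∫ s in 0..t, exp ((t - s) • Y) *ᵥ g s := by
  have hexp : ∀ s : ℝ, HasDerivAt (fun r : ℝ => exp ((-r) • Y)) (-(exp ((-s) • Y) * Y)) s := by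
    intro s
    have h := (hasDerivAt_exp_smul_const Y (-s)).scomp s (hasDerivAt_neg s)
    rwa [neg_one_smul] at h
  have hderiv : ∀ s ∈ Set.uIcc 0 t,
      HasDerivAt (fun r => exp ((-r) • Y) *ᵥ x r) (exp ((-s) • Y) *ᵥ g s) s := by
    intro s hs
    rw [Set.uIcc_of_le ht] at hs
    have h1 := mulVecL.hasFDerivAt.comp_hasDerivAt s (hexp s)
    have h2 := h1.clm_apply (hx s hs.1)
    refine h2.congr_deriv ?_
    show mulVecL (-(exp ((-s) • Y) * Y)) (x s) + mulVecL (exp ((-s) • Y)) (g s + Y *ᵥ x s) = _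
    simp only [mulVecL_apply, neg_mulVec, mulVec_add, mulVec_mulVec]
    abel
  have hint_cont : Continuous fun s : ℝ => exp ((-s) • Y) *ᵥ g s :=
    (mulVecL.continuous.comp ((continuous_exp_smul Y).comp continuous_neg)).clm_apply hg
  have hftc := intervalIntegral.integral_eq_sub_of_hasDerivAt hderiv
    (hint_cont.intervalIntegrable 0 t)
  calc x t = exp (t • Y) *ᵥ (exp ((-t) • Y) *ᵥ x t) := by
        rw [mulVec_mulVec, exp_smul_mul_exp_smul, add_neg_cancel, zero_smul, exp_zero,
          one_mulVec]
    _ = exp (t • Y) *ᵥ (x 0 + ∫ s in 0..t, exp ((-s) • Y) *ᵥ g s) := by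
        rw [hftc, neg_zero, zero_smul, exp_zero, one_mulVec, add_sub_cancel]
    _ = _ := by
        rw [mulVec_add, mulVec_intervalIntegral _ (hint_cont.intervalIntegrable 0 t)]
        simp only [mulVec_mulVec, exp_smul_mul_exp_smul, sub_eq_add_neg]

lemma exp_smul_mul_eq_self_of_mul_eq_zero {Y E : Matrix n n ℝ} (h : Y * E = 0) (r : ℝ) :
    exp (r • Y) * E = E := by
  have hd : ∀ s : ℝ, HasDerivAt (fun r : ℝ => exp (r • Y) * E) 0 s := fun s => by
    have hs := (hasDerivAt_exp_smul_const Y s).mul_const E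
    rwa [mul_assoc, h, mul_zero] at hs
  simpa using is_const_of_deriv_eq_zero (fun s => (hd s).differentiableAt)
    (fun s => (hd s).deriv) r 0

lemma norm_integral_exp_smul_mul_mulVec_le {Y F : Matrix n n ℝ} {β C B t : ℝ} (hβ : β < 0)
    (ht : 0 ≤ t) (hF : ∀ r, 0 ≤ r → ‖exp (r • Y) * F‖ ≤ C * Real.exp (β * r)) {g : ℝ → n → ℝ}
    (hg : ∀ s, 0 ≤ s → ‖g s‖ ≤ B) :
    ‖∫ s in 0..t, (exp ((t - s) • Y) * F) *ᵥ g s‖ ≤ C * B / -β := by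
  have hbound := norm_integral_le_of_norm_le_exp (neg_pos.2 hβ) ht
    (f := fun s => (exp ((t - s) • Y) * F) *ᵥ g s) (C := C * B * Real.exp (β * t)) fun s hs => by
      have hts : 0 ≤ t - s := sub_nonneg.2 hs.2
      calc ‖(exp ((t - s) • Y) * F) *ᵥ g s‖ ≤ ‖exp ((t - s) • Y) * F‖ * ‖g s‖ :=
            linfty_opNorm_mulVec _ _
        _ ≤ C * Real.exp (β * (t - s)) * B :=
            mul_le_mul (hF _ hts) (hg s hs.1) (norm_nonneg _) ((norm_nonneg _).trans (hF _ hts))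
        _ = C * B * Real.exp (β * t) * Real.exp (-β * s) := by
            rw [mul_assoc (C * B), ← Real.exp_add]; ring_nf
  rwa [mul_assoc, ← Real.exp_add, neg_mul, add_neg_cancel, Real.exp_zero, mul_one] at hbound

theorem exists_bound_of_hasDerivAt {Y E F : Matrix n n ℝ} (hEF : E + F = 1) (hYE : Y * E = 0)
    {β C : ℝ} (hβ : β < 0) (hF : ∀ t, 0 ≤ t → ‖exp (t • Y) * F‖ ≤ C * Real.exp (β * t))
    {x g : ℝ → n → ℝ} (hg : Continuous g) {B M : ℝ} (hgB : ∀ s, 0 ≤ s → ‖g s‖ ≤ B)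
    (hgM : ∀ t, 0 ≤ t → ‖∫ s in 0..t, g s‖ ≤ M)
    (hx : ∀ t, 0 ≤ t → HasDerivAt x (g t + Y *ᵥ x t) t) :
    ∃ U, ∀ t, 0 ≤ t → ‖x t‖ ≤ U := by
  have hsplit : ∀ r : ℝ, exp (r • Y) = E + exp (r • Y) * F := fun r => by
    conv_lhs => rw [← mul_one (exp (r • Y)), ← hEF, mul_add,
      exp_smul_mul_eq_self_of_mul_eq_zero hYE]
  have hC : 0 ≤ C := by simpa using (norm_nonneg _).trans (hF 0 le_rfl)
  refine ⟨‖E‖ * (‖x 0‖ + M) + C * ‖x 0‖ + C * B / -β, fun t ht => ?_⟩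
  have hint : ∫ s in 0..t, exp ((t - s) • Y) *ᵥ g s
      = E *ᵥ (∫ s in 0..t, g s) + ∫ s in 0..t, (exp ((t - s) • Y) * F) *ᵥ g s := by
    have hcont : Continuous fun s => (exp ((t - s) • Y) * F) *ᵥ g s :=
      (mulVecL.continuous.comp (((continuous_exp_smul Y).comp
        (continuous_sub_left t)).mul continuous_const)).clm_apply hg
    have hEcont : Continuous fun s => E *ᵥ g s := (mulVecL E).continuous.comp hg
    rw [mulVec_intervalIntegral E (hg.intervalIntegrable 0 t),
      ← intervalIntegral.integral_add (hEcont.intervalIntegrable 0 t)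
        (hcont.intervalIntegrable 0 t)]
    refine intervalIntegral.integral_congr fun s _ => ?_
    conv_lhs => rw [hsplit, add_mulVec]
  have hrep : x t = E *ᵥ (x 0 + ∫ s in 0..t, g s) + (exp (t • Y) * F) *ᵥ x 0
      + ∫ s in 0..t, (exp ((t - s) • Y) * F) *ᵥ g s := by
    conv_lhs => rw [eq_exp_smul_mulVec_add_integral Y hg hx ht, hint, hsplit t]
    rw [add_mulVec, mulVec_add]
    abel
  have hE : ‖E *ᵥ (x 0 + ∫ s in 0..t, g s)‖ ≤ ‖E‖ * (‖x 0‖ + M) :=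
    (linfty_opNorm_mulVec _ _).trans <| by
      gcongr
      exact (norm_add_le _ _).trans (by gcongr; exact hgM t ht)
  have hFx : ‖(exp (t • Y) * F) *ᵥ x 0‖ ≤ C * ‖x 0‖ := by
    have hexp_le : Real.exp (β * t) ≤ 1 := Real.exp_le_one_iff.2 (by nlinarith)
    calc ‖(exp (t • Y) * F) *ᵥ x 0‖ ≤ C * Real.exp (β * t) * ‖x 0‖ :=
          (linfty_opNorm_mulVec _ _).trans (by gcongr; exact hF t ht)
      _ ≤ C * ‖x 0‖ := by gcongr; exact mul_le_of_le_one_right hC hexp_le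
  have hFg := norm_integral_exp_smul_mul_mulVec_le hβ ht hF hgB
  rw [hrep]
  exact (norm_add_le _ _).trans (add_le_add ((norm_add_le _ _).trans (add_le_add hE hFx)) hFg)

end Matrix

theorem stmt14_general
    (m : ℕ)
    (Y : Matrix (Fin m) (Fin m) ℝ)
    -- `0` is a simple eigenvalue of `Y` (algebraic multiplicity one)
    (hsimple :
      Polynomial.rootMultiplicity 0
        (Matrix.charpoly (Y.map fun x : ℝ => (x : ℂ))) = 1)
    -- every nonzero eigenvalue of `Y` has negative real part
    (hneg : ∀ μ : ℂ,
      μ ∈ (Matrix.charpoly (Y.map fun x : ℝ => (x : ℂ))).roots →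
      μ ≠ 0 → μ.re < 0)
    (T : ℝ) (hT : 0 < T)
    (z : ℝ → Fin m → ℝ)
    (hzc : ∀ i, Continuous fun t => z t i)
    (hzp : ∀ i t, z (t + T) i = z t i)
    (hzint : ∀ i, (∫ s in (0:ℝ)..T, z s i) = 0)
    (Φ : ℝ → Fin m → ℝ)
    (hΦ : ∀ (i : Fin m) (t : ℝ), 0 ≤ t →
      HasDerivAt (fun s => Φ s i) (z t i + Y.mulVec (Φ t) i) t) :
    ∃ U : ℝ, 0 < U ∧ ∀ t, 0 ≤ t → Real.sqrt (∑ i, (Φ t i) ^ 2) ≤ U := by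
  obtain ⟨E, F, hEF, hYE, β, hβ, C, hF⟩ :=
    Y.exists_splitting_of_rootMultiplicity_zero_eq_one hsimple hneg
  have hz : Continuous z := continuous_pi hzc
  have hzper : Function.Periodic z T := fun t => funext fun i => hzp i t
  have hzmean : ∫ s in 0..T, z s = 0 := funext fun i =>
    ((ContinuousLinearMap.proj (R := ℝ) i).intervalIntegral_comp_comm
      (hz.intervalIntegrable 0 T)).symm.trans (hzint i)
  obtain ⟨B, hB⟩ := hzper.exists_norm_le hT.ne' hz
  obtain ⟨M, hM⟩ := hzper.exists_norm_integral_le hT.ne' hz hzmean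
  obtain ⟨U, hU⟩ := exists_bound_of_hasDerivAt hEF hYE hβ hF hz (fun s _ => hB s)
    (fun t _ => hM t) fun t ht => hasDerivAt_pi.2 fun i => hΦ i t ht
  refine ⟨√m * max U 0 + 1, by positivity, fun t ht => ?_⟩
  calc √(∑ i, Φ t i ^ 2) ≤ √m * ‖Φ t‖ := by simpa using Real.sqrt_sum_sq_le (Φ t)
    _ ≤ √m * max U 0 := by gcongr; exact (hU t ht).trans (le_max_left _ _)
    _ ≤ √m * max U 0 + 1 := by linarith

theorem stmt14
    (m : ℕ) (hm : 1 ≤ m)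
    (Y : Matrix (Fin m) (Fin m) ℝ)
    -- `0` is a simple eigenvalue of `Y` (algebraic multiplicity one)
    (hsimple :
      Polynomial.rootMultiplicity 0
        (Matrix.charpoly (Y.map fun x : ℝ => (x : ℂ))) = 1)
    -- every nonzero eigenvalue of `Y` has negative real part
    (hneg : ∀ μ : ℂ,
      μ ∈ (Matrix.charpoly (Y.map fun x : ℝ => (x : ℂ))).roots →
      μ ≠ 0 → μ.re < 0)
    (T : ℝ) (hT : 0 < T)
    (z : ℝ → Fin m → ℝ)
    (hzc : ∀ i, Continuous fun t => z t i)
    (hzb : ∃ B : ℝ, ∀ t, 0 ≤ t → ∀ i, |z t i| ≤ B)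
    (hzp : ∀ i t, z (t + T) i = z t i)
    (hzint : ∀ i, (∫ s in (0:ℝ)..T, z s i) = 0)
    (Φ : ℝ → Fin m → ℝ)
    (hΦ : ∀ (i : Fin m) (t : ℝ), 0 ≤ t →
      HasDerivAt (fun s => Φ s i) (z t i + Y.mulVec (Φ t) i) t) :
    ∃ U : ℝ, 0 < U ∧ ∀ t, 0 ≤ t → Real.sqrt (∑ i, (Φ t i) ^ 2) ≤ U :=
  stmt14_general m Y hsimple hneg T hT z hzc hzp hzint Φ hΦ
end

section
/- Let Y = [y_{ij}] ∈ ℝ^{m×m} satisfy y_{ii} = −Σ_{j≠i} y_{ij} for every i (so that Y·𝟙 = 0, where 𝟙 = (1,…,1)ᵀ). Suppose min_{i≠j} { y_{ij} + y_{ji} + Σ_{k≠i,j} min(y_{ik}, y_{jk}) } > 0. Then 0 is a simple eigenvalue of Y (algebraic multiplicity one) and every nonzero eigenvalue of Y has negative real part. -/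
open scoped BigOperators
open Matrix

/-!
For `x ∈ ℂᵐ` pick `i, j` maximising `|x_i - x_j|` and put `d = x_i - x_j`, `w_k = min(y_ik, y_jk)`.
The zero row sums give
`(Yx)_i - (Yx)_j = -c_ij d + Σ_{k ≠ i,j} ((y_ik - w_k)(x_k - x_i) + (y_jk - w_k)(x_j - x_k))`,
with `c_ij > 0` the quantity of the hypothesis. The weights are nonnegative and, by maximality of
`|d|`, each `Re(conj d · (x_k - x_i))` and `Re(conj d · (x_j - x_k))` is `≤ 0`; hence
`Re(conj d · ((Yx)_i - (Yx)_j)) ≤ -c_ij |d|² < 0` unless `x` is constant.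
For an eigenvector the left side is `Re μ · |d|²`, and a constant eigenvector has `μ = 0`.
If `Yx` is constant the left side vanishes, so `x` is constant; thus `ker Yᵏ = span 𝟙` for all
`k ≥ 1`, and the generalized eigenspace of `0`, of dimension the algebraic multiplicity, is a line.
-/

open Finset ComplexConjugate

section

variable {ι R : Type*} [Fintype ι] [DecidableEq ι]

theorem Finset.sum_eq_add_add_sum_filter_ne_ne [AddCommMonoid R] {i j : ι} (hij : i ≠ j)
    (f : ι → R) :
    ∑ k, f k = f i + f j + ∑ k ∈ univ.filter (fun k => k ≠ i ∧ k ≠ j), f k := by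
  have hS : (univ.erase i).erase j = univ.filter (fun k => k ≠ i ∧ k ≠ j) := by
    ext k; simp [and_comm]
  rw [← hS, add_assoc, add_sum_erase _ f (by simp [hij.symm]), add_sum_erase _ f (mem_univ i)]

theorem Matrix.mulVec_apply_sub_mulVec_apply_eq [CommRing R] (A : Matrix ι ι R)
    (hA : ∀ i, ∑ k, A i k = 0) {i j : ι} (hij : i ≠ j) (w x : ι → R) :
    (A *ᵥ x) i - (A *ᵥ x) j =
      -(A i j + A j i + ∑ k ∈ univ.filter (fun k => k ≠ i ∧ k ≠ j), w k) * (x i - x j) +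
        ∑ k ∈ univ.filter (fun k => k ≠ i ∧ k ≠ j),
          ((A i k - w k) * (x k - x i) + (A j k - w k) * (x j - x k)) := by
  have hi := hA i
  have hj := hA j
  rw [sum_eq_add_add_sum_filter_ne_ne hij] at hi hj
  simp only [mulVec, dotProduct]
  rw [sum_eq_add_add_sum_filter_ne_ne hij, sum_eq_add_add_sum_filter_ne_ne hij]
  have hterm : ∀ k, (A i k - w k) * (x k - x i) + (A j k - w k) * (x j - x k) =
      A i k * x k - A j k * x k - A i k * x i + A j k * x j + w k * (x i - x j) := fun k => by ring
  simp only [hterm, sum_add_distrib, sum_sub_distrib, ← sum_mul]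
  linear_combination x i * hi - x j * hj

end

theorem Complex.re_conj_mul_sub_nonpos {z w : ℂ} (h : ‖w‖ ≤ ‖z‖) : (conj z * (w - z)).re ≤ 0 := by
  have hzw : (conj z * w).re ≤ ‖z‖ * ‖z‖ :=
    calc (conj z * w).re ≤ ‖conj z * w‖ := re_le_norm _
      _ = ‖z‖ * ‖w‖ := by rw [norm_mul, norm_conj]
      _ ≤ ‖z‖ * ‖z‖ := by gcongr
  rw [mul_sub, sub_re, conj_mul', ← ofReal_pow, ofReal_re]
  linarith [sq ‖z‖]

theorem mulVec_map_ofReal_const_eq_zero {ι : Type*} [Fintype ι] {Y : Matrix ι ι ℝ}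
    (hY : ∀ i, ∑ k, Y i k = 0) (c : ℂ) : Y.map ((↑) : ℝ → ℂ) *ᵥ (fun _ => c) = 0 :=
  funext fun i => by simp [mulVec, dotProduct, ← sum_mul, ← Complex.ofReal_sum, hY]

section

variable {ι : Type*} [Fintype ι] [DecidableEq ι]

def Matrix.minCoupling (Y : Matrix ι ι ℝ) (i j : ι) : ℝ :=
  Y i j + Y j i + ∑ k ∈ univ.filter (fun k => k ≠ i ∧ k ≠ j), min (Y i k) (Y j k)

variable {Y : Matrix ι ι ℝ}

theorem re_conj_sub_mul_sub_mulVec_le (hY : ∀ i, ∑ k, Y i k = 0) {x : ι → ℂ} {i j : ι}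
    (hij : i ≠ j) (hmax : ∀ k l, ‖x k - x l‖ ≤ ‖x i - x j‖) :
    (conj (x i - x j) * ((Y.map (↑) *ᵥ x) i - (Y.map (↑) *ᵥ x) j)).re ≤
      -Y.minCoupling i j * ‖x i - x j‖ ^ 2 := by
  have hYC : ∀ i, ∑ k, Y.map ((↑) : ℝ → ℂ) i k = 0 := fun i => by
    simp [← Complex.ofReal_sum, hY i]
  have hcoef : -(Y.map ((↑) : ℝ → ℂ) i j + Y.map (↑) j i +
      ∑ k ∈ univ.filter (fun k => k ≠ i ∧ k ≠ j), ((min (Y i k) (Y j k) : ℝ) : ℂ)) =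
      ((-Y.minCoupling i j : ℝ) : ℂ) := by
    simp [Matrix.minCoupling]
  rw [(Y.map (↑)).mulVec_apply_sub_mulVec_apply_eq hYC hij
      (fun k => ((min (Y i k) (Y j k) : ℝ) : ℂ)),
    hcoef, mul_add, Complex.add_re, mul_left_comm, Complex.conj_mul', ← Complex.ofReal_pow,
    ← Complex.ofReal_mul, Complex.ofReal_re, mul_sum, Complex.re_sum]
  refine add_le_of_nonpos_right (sum_nonpos fun k _ => ?_)
  have hki : (conj (x i - x j) * (x k - x i)).re ≤ 0 := by
    simpa using Complex.re_conj_mul_sub_nonpos (hmax k j)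
  have hjk : (conj (x i - x j) * (x j - x k)).re ≤ 0 := by
    simpa using Complex.re_conj_mul_sub_nonpos (hmax i k)
  rw [mul_add, Complex.add_re, mul_left_comm, mul_left_comm (conj _), map_apply, map_apply,
    ← Complex.ofReal_sub, ← Complex.ofReal_sub, Complex.re_ofReal_mul, Complex.re_ofReal_mul]
  exact add_nonpos (mul_nonpos_of_nonneg_of_nonpos (sub_nonneg.2 (min_le_left _ _)) hki)
    (mul_nonpos_of_nonneg_of_nonpos (sub_nonneg.2 (min_le_right _ _)) hjk)

theorem exists_re_conj_sub_mul_sub_mulVec_neg (hY : ∀ i, ∑ k, Y i k = 0)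
    (hmin : ∀ i j, i ≠ j → 0 < Y.minCoupling i j) {x : ι → ℂ} {a b : ι} (hab : x a ≠ x b) :
    ∃ i j, x i ≠ x j ∧
      (conj (x i - x j) * ((Y.map (↑) *ᵥ x) i - (Y.map (↑) *ᵥ x) j)).re < 0 := by
  obtain ⟨⟨i, j⟩, -, hmax⟩ :=
    exists_max_image univ (fun p : ι × ι => ‖x p.1 - x p.2‖) ⟨(a, b), mem_univ _⟩
  replace hmax : ∀ k l, ‖x k - x l‖ ≤ ‖x i - x j‖ := fun k l => hmax (k, l) (mem_univ _)
  have hd : 0 < ‖x i - x j‖ := (norm_pos_iff.2 (sub_ne_zero.2 hab)).trans_le (hmax a b)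
  have hij : i ≠ j := by rintro rfl; simp at hd
  refine ⟨i, j, sub_ne_zero.1 (norm_pos_iff.1 hd),
    (re_conj_sub_mul_sub_mulVec_le hY hij hmax).trans_lt ?_⟩
  rw [neg_mul, neg_lt_zero]
  exact mul_pos (hmin i j hij) (pow_pos hd 2)

theorem eq_of_mulVec_eq_const (hY : ∀ i, ∑ k, Y i k = 0)
    (hmin : ∀ i j, i ≠ j → 0 < Y.minCoupling i j) {x : ι → ℂ} {t : ℂ}
    (hx : Y.map (↑) *ᵥ x = fun _ => t) (a b : ι) :
    x a = x b := by
  by_contra hab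
  obtain ⟨i, j, -, hneg⟩ := exists_re_conj_sub_mul_sub_mulVec_neg hY hmin hab
  simp [hx] at hneg

theorem eq_of_pow_mulVec_eq_zero (hY : ∀ i, ∑ k, Y i k = 0)
    (hmin : ∀ i j, i ≠ j → 0 < Y.minCoupling i j) (k : ℕ) {x : ι → ℂ}
    (hx : Y.map (↑) ^ k *ᵥ x = 0) (a b : ι) :
    x a = x b := by
  induction k generalizing x a b with
  | zero => simp_all
  | succ k ih =>
    rw [pow_succ, ← mulVec_mulVec] at hx
    exact eq_of_mulVec_eq_const hY hmin (funext fun i => ih hx i a) a b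

theorem maxGenEigenspace_toLin'_zero_eq_span [Nonempty ι] (hY : ∀ i, ∑ k, Y i k = 0)
    (hmin : ∀ i j, i ≠ j → 0 < Y.minCoupling i j) :
    Module.End.maxGenEigenspace (toLin' (Y.map ((↑) : ℝ → ℂ))) 0 = ℂ ∙ fun _ => 1 := by
  ext x
  simp only [Module.End.mem_maxGenEigenspace, Submodule.mem_span_singleton, zero_smul, sub_zero,
    ← toLin'_pow, toLin'_apply]
  constructor
  · rintro ⟨k, hk⟩
    let a := Classical.arbitrary ι
    exact ⟨x a, funext fun b => by simp [eq_of_pow_mulVec_eq_zero hY hmin k hk b a]⟩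
  · rintro ⟨c, rfl⟩
    exact ⟨1, by simpa [Pi.smul_def] using mulVec_map_ofReal_const_eq_zero hY c⟩

theorem re_lt_zero_of_mulVec_eq_smul (hY : ∀ i, ∑ k, Y i k = 0)
    (hmin : ∀ i j, i ≠ j → 0 < Y.minCoupling i j) {v : ι → ℂ} {μ : ℂ}
    (hv : Y.map (↑) *ᵥ v = μ • v)
    (hv0 : v ≠ 0) (hμ : μ ≠ 0) : μ.re < 0 := by
  obtain ⟨a, ha⟩ := Function.ne_iff.1 hv0
  by_cases hconst : ∀ b, v b = v a
  · have hμv : μ • v = 0 := by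
      rw [← hv, show v = fun _ => v a from funext hconst, mulVec_map_ofReal_const_eq_zero hY]
    exact absurd hμv (smul_ne_zero hμ hv0)
  · obtain ⟨b, hb⟩ := not_forall.1 hconst
    obtain ⟨i, j, hij, hneg⟩ := exists_re_conj_sub_mul_sub_mulVec_neg hY hmin hb
    have hd : 0 < ‖v i - v j‖ := norm_pos_iff.2 (sub_ne_zero.2 hij)
    rw [hv, Pi.smul_apply, Pi.smul_apply, smul_eq_mul, smul_eq_mul, ← mul_sub, mul_left_comm,
      Complex.conj_mul', ← Complex.ofReal_pow, Complex.re_mul_ofReal] at hneg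
    exact neg_of_mul_neg_left hneg (pow_pos hd 2).le

end

theorem stmt16
    (m : ℕ) (hm : 1 ≤ m)
    (Y : Matrix (Fin m) (Fin m) ℝ)
    -- zero row sums: `y_{ii} = -Σ_{j≠i} y_{ij}`
    (hrow : ∀ i, Y i i = -∑ j ∈ Finset.univ.filter (fun j => j ≠ i), Y i j)
    -- `min_{i≠j} { y_{ij} + y_{ji} + Σ_{k≠i,j} min(y_{ik}, y_{jk}) } > 0`
    (hmin : ∀ i j : Fin m, i ≠ j →
      0 < Y i j + Y j i +
        ∑ k ∈ Finset.univ.filter (fun k => k ≠ i ∧ k ≠ j),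
          min (Y i k) (Y j k)) :
    Polynomial.rootMultiplicity 0
      (Matrix.charpoly (Y.map fun x : ℝ => (x : ℂ))) = 1 ∧
    ∀ μ : ℂ, μ ∈ (Matrix.charpoly (Y.map fun x : ℝ => (x : ℂ))).roots →
      μ ≠ 0 → μ.re < 0 := by
  have hY : ∀ i, ∑ k, Y i k = 0 := fun i => by
    rw [← add_sum_erase _ _ (mem_univ i), ← filter_ne', hrow i, neg_add_cancel]
  have : Nonempty (Fin m) := ⟨⟨0, hm⟩⟩
  refine ⟨?_, fun μ hμ hμ0 => ?_⟩
  · rw [← charpoly_toLin', ← LinearMap.finrank_maxGenEigenspace_eq,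
      maxGenEigenspace_toLin'_zero_eq_span hY hmin, finrank_span_singleton]
    exact Function.ne_iff.2 ⟨⟨0, hm⟩, one_ne_zero⟩
  · have hroot : (toLin' (Y.map fun x : ℝ => (x : ℂ))).charpoly.IsRoot μ := by
      rw [charpoly_toLin']
      exact (Polynomial.mem_roots'.1 hμ).2
    obtain ⟨v, hv, hv0⟩ :=
      ((Module.End.hasEigenvalue_iff_isRoot_charpoly _ μ).2 hroot).exists_hasEigenvector
    exact re_lt_zero_of_mulVec_eq_smul hY hmin (Module.End.mem_eigenspace_iff.1 hv) hv0 hμ0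
end

section
/- Let b_{ij} : [0,∞) → ℝ (i ≠ j, i,j ∈ {1,…,m}) be continuous functions of arbitrary sign, and let δ : [0,∞) → ℝ^m be a solution of the linear time-varying system δ̇_i = Σ_{j≠i} b_{ij}(t)·(δ_j − δ_i). Define ξ(t) = −min_{i≠j} { b_{ij}(t) + b_{ji}(t) + Σ_{k≠i,j} min(b_{ik}(t), b_{jk}(t)) } and V(δ) = max_i δ_i − min_i δ_i. Then V(δ(t)) ≤ exp(∫_0^t ξ(s) ds)·V(δ(0)) for all t ≥ 0. -/
/-! The diameter `V(δ(t))` is the maximum over ordered pairs `(i, j)` of `δ_i(t) - δ_j(t)`, so its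
lower right Dini derivative is at most the derivative of `δ_i - δ_j` along a pair attaining the
maximum. For such a pair `δ_i` is the largest and `δ_j` the smallest component; every other `δ_k`
lies between them, so the terms of index `k` in `δ̇_i - δ̇_j` contribute at most
`-min(b_ik, b_jk) (δ_i - δ_j)`, and the derivative is at most `ξ(t) V(δ(t))`. A comparison with the
strict supersolutions `exp(∫₀ᵗ ξ) (V(δ(0)) + ε (t + 1))` of `V' = ξ V` then gives the bound. -/

open scoped BigOperators

/-- `ξ(t) = -min_{i≠j} { b_{ij}(t) + b_{ji}(t) + Σ_{k≠i,j} min(b_{ik}(t), b_{jk}(t)) }`. -/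
noncomputable def xi19 (m : ℕ) (b : Fin m → Fin m → ℝ → ℝ) (t : ℝ) : ℝ :=
  -sInf {x : ℝ | ∃ i j : Fin m, i ≠ j ∧
    x = b i j t + b j i t +
      ∑ k ∈ Finset.univ.filter (fun k => k ≠ i ∧ k ≠ j),
        min (b i k t) (b j k t)}

/-- `V(δ) = max_i δ_i - min_i δ_i`. -/
noncomputable def Vdiam (m : ℕ) (δ : Fin m → ℝ) : ℝ :=
  (⨆ i : Fin m, δ i) - ⨅ i : Fin m, δ i

open Set Filter Topology Finset

theorem ciSup_sub_ciInf_eq_sup' {ι : Type*} [Fintype ι] [Nonempty ι] (v : ι → ℝ) :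
    (⨆ i, v i) - ⨅ i, v i = univ.sup' univ_nonempty (fun p : ι × ι => v p.1 - v p.2) := by
  obtain ⟨i, -, hi⟩ := exists_mem_eq_sup' univ_nonempty v
  obtain ⟨j, -, hj⟩ := exists_mem_eq_inf' univ_nonempty v
  rw [← sup'_univ_eq_ciSup, ← inf'_univ_eq_ciInf]
  refine le_antisymm ?_ (sup'_le _ _ fun p _ => sub_le_sub (le_sup' v (mem_univ _))
    (inf'_le v (mem_univ _)))
  rw [hi, hj]
  exact le_sup' (fun p : ι × ι => v p.1 - v p.2) (mem_univ (i, j))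

theorem mul_sub_sub_mul_sub_le_neg_min_mul {c d u x y : ℝ} (hy : y ≤ u) (hx : u ≤ x) :
    c * (u - x) - d * (u - y) ≤ -min c d * (x - y) := by
  rcases le_total c d with h | h
  · rw [min_eq_left h]; nlinarith
  · rw [min_eq_right h]; nlinarith

theorem hasDerivWithinAt_integral_Ici_of_continuousOn {ξ : ℝ → ℝ} {a b x : ℝ}
    (hξ : ContinuousOn ξ (Icc a b)) (hx : x ∈ Ico a b) :
    HasDerivWithinAt (fun t => ∫ s in a..t, ξ s) (ξ x) (Ici x) x := by
  have hxIcc : x ∈ Icc a b := Ico_subset_Icc_self hx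
  have := Fact.mk hxIcc
  have hIcc : HasDerivWithinAt (fun t => ∫ s in a..t, ξ s) (ξ x) (Icc a b) x :=
    intervalIntegral.integral_hasDerivWithinAt_right
      ((hξ.mono (Icc_subset_Icc le_rfl hxIcc.2)).intervalIntegrable_of_Icc hx.1)
      (hξ.stronglyMeasurableAtFilter_nhdsWithin measurableSet_Icc x) (hξ x hxIcc)
  exact hIcc.mono_of_mem_nhdsWithin <|
    mem_of_superset (Icc_mem_nhdsGE hx.2) (Icc_subset_Icc_left hx.1)

theorem le_exp_integral_mul_of_frequently_slope_lt {f ξ : ℝ → ℝ} {a b : ℝ} (hab : a ≤ b)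
    (hf : ContinuousOn f (Icc a b)) (hξ : ContinuousOn ξ (Icc a b))
    (hslope : ∀ x ∈ Ico a b, ∀ r, ξ x * f x < r → ∃ᶠ z in 𝓝[>] x, slope f x z < r) :
    f b ≤ Real.exp (∫ s in a..b, ξ s) * f a := by
  set I : ℝ → ℝ := fun t => ∫ s in a..t, ξ s
  have hIc : ContinuousOn I (Icc a b) := by
    have hint : MeasureTheory.IntegrableOn ξ (uIcc a b) := by
      simpa only [uIcc_of_le hab] using hξ.integrableOn_Icc
    simpa only [uIcc_of_le hab] using intervalIntegral.continuousOn_primitive_interval hint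
  -- `B' = ξ B + ε exp I > ξ B`, so `B` is a strict supersolution.
  have hB : ∀ ε > 0, f b ≤ Real.exp (I b) * (f a + ε * (b - a + 1)) := by
    intro ε hε
    refine image_le_of_liminf_slope_right_lt_deriv_boundary' hf hslope
      (B := fun t => Real.exp (I t) * (f a + ε * (t - a + 1)))
      (B' := fun t => Real.exp (I t) * ξ t * (f a + ε * (t - a + 1)) + Real.exp (I t) * ε)
      ?_ ?_ ?_ ?_ (right_mem_Icc.2 hab)
    · simp [I]; linarith
    · fun_prop
    · intro x hx
      have hlin : HasDerivWithinAt (fun t => f a + ε * (t - a + 1)) ε (Ici x) x := by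
        simpa using
          ((((hasDerivWithinAt_id x _).sub_const a).add_const 1).const_mul ε).const_add (f a)
      exact ((hasDerivWithinAt_integral_Ici_of_continuousOn hξ hx).exp.mul hlin).congr_deriv
        (by ring)
    · intro x _ hfx
      rw [hfx]
      nlinarith [Real.exp_pos (I x)]
  refine le_of_forall_pos_le_add fun ε hε => ?_
  have hba : 0 < b - a + 1 := by linarith
  have hD : 0 < Real.exp (I b) * (b - a + 1) := by positivity
  calc f b ≤ Real.exp (I b) * (f a + ε / (Real.exp (I b) * (b - a + 1)) * (b - a + 1)) :=
        hB _ (div_pos hε hD)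
    _ = Real.exp (I b) * f a + ε := by field_simp

theorem frequently_slope_finset_sup'_lt {ι : Type*} {s : Finset ι} (hs : s.Nonempty)
    {g : ι → ℝ → ℝ} {g' : ι → ℝ} {x r : ℝ} (hg : ∀ p ∈ s, HasDerivAt (g p) (g' p) x)
    (hr : ∀ p ∈ s, g p x = s.sup' hs (fun q => g q x) → g' p < r) :
    ∃ᶠ z in 𝓝[>] x, slope (fun z => s.sup' hs fun q => g q z) x z < r := by
  set f := fun z => s.sup' hs fun q => g q z
  obtain ⟨p, hp, hfreq⟩ : ∃ p ∈ s, ∃ᶠ z in 𝓝[>] x, f z = g p z := by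
    rw [← Finset.frequently_exists]
    refine Frequently.of_forall fun z => ?_
    obtain ⟨p, hp, hpz⟩ := exists_mem_eq_sup' hs fun q => g q z
    exact ⟨p, hp, hpz⟩
  have hfc : ContinuousAt f x :=
    ContinuousAt.finset_sup'_apply hs fun q hq => (hg q hq).continuousAt
  have hpx : g p x = f x := tendsto_nhds_unique_of_frequently_eq
    ((hg p hp).continuousAt.tendsto.mono_left nhdsWithin_le_nhds)
    (hfc.tendsto.mono_left nhdsWithin_le_nhds) (hfreq.mono fun z h => h.symm)
  have hslope : ∀ᶠ z in 𝓝[>] x, slope (g p) x z < r :=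
    ((hasDerivAt_iff_tendsto_slope.1 (hg p hp)).mono_left
      (nhdsWithin_mono x fun z hz => ne_of_gt hz)).eventually_lt_const (hr p hp hpx)
  refine (hfreq.and_eventually hslope).mono fun z ⟨hfz, hz⟩ => ?_
  rwa [slope_def_field, hfz, ← hpx, ← slope_def_field]

section Consensus

variable {ι : Type*} [Fintype ι] [DecidableEq ι]

def consensusField (b : ι → ι → ℝ) (v : ι → ℝ) (i : ι) : ℝ :=
  ∑ j ∈ univ.filter (fun j => j ≠ i), b i j * (v j - v i)

def pairCoeff (b : ι → ι → ℝ) (i j : ι) : ℝ :=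
  b i j + b j i + ∑ k ∈ univ.filter (fun k => k ≠ i ∧ k ≠ j), min (b i k) (b j k)

theorem sum_filter_ne_eq_add_sum_filter_ne_ne {M : Type*} [AddCommMonoid M] (f : ι → M)
    {i j : ι} (hij : i ≠ j) :
    ∑ k ∈ univ.filter (fun k => k ≠ i), f k =
      f j + ∑ k ∈ univ.filter (fun k => k ≠ i ∧ k ≠ j), f k := by
  have hj : j ∈ univ.filter (fun k => k ≠ i) := by simpa using hij.symm
  rw [← sum_erase_add _ _ hj, add_comm]
  congr 2
  ext k
  simp [and_comm]

theorem consensusField_sub_le (b : ι → ι → ℝ) {v : ι → ℝ} {i j : ι} (hij : i ≠ j)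
    (hmin : ∀ k, v j ≤ v k) (hmax : ∀ k, v k ≤ v i) :
    consensusField b v i - consensusField b v j ≤ -pairCoeff b i j * (v i - v j) := by
  have hsym : univ.filter (fun k => k ≠ j ∧ k ≠ i) = univ.filter (fun k => k ≠ i ∧ k ≠ j) := by
    simp only [and_comm]
  have hterms := sum_le_sum fun k (_ : k ∈ univ.filter (fun k => k ≠ i ∧ k ≠ j)) =>
    mul_sub_sub_mul_sub_le_neg_min_mul (c := b i k) (d := b j k) (hmin k) (hmax k)
  rw [consensusField, consensusField, sum_filter_ne_eq_add_sum_filter_ne_ne _ hij,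
    sum_filter_ne_eq_add_sum_filter_ne_ne _ hij.symm, hsym, pairCoeff]
  rw [sum_sub_distrib, ← sum_mul, sum_neg_distrib] at hterms
  linarith

end Consensus

theorem neg_pairCoeff_le_xi19 {m : ℕ} (b : Fin m → Fin m → ℝ → ℝ) (t : ℝ) {i j : Fin m}
    (hij : i ≠ j) : -pairCoeff (fun i j => b i j t) i j ≤ xi19 m b t := by
  refine neg_le_neg (csInf_le ?_ ⟨i, j, hij, rfl⟩)
  refine ((Set.finite_range fun p : Fin m × Fin m =>
    pairCoeff (fun i j => b i j t) p.1 p.2).subset ?_).bddBelow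
  rintro _ ⟨i, j, -, rfl⟩
  exact ⟨(i, j), rfl⟩

theorem xi19_eq_neg_inf' {m : ℕ} (b : Fin m → Fin m → ℝ → ℝ) (t : ℝ)
    (hP : (univ.filter fun p : Fin m × Fin m => p.1 ≠ p.2).Nonempty) :
    xi19 m b t = -(univ.filter fun p : Fin m × Fin m => p.1 ≠ p.2).inf' hP
      fun p => pairCoeff (fun i j => b i j t) p.1 p.2 := by
  rw [xi19, inf'_eq_csInf_image]
  congr 2
  ext x
  constructor
  · rintro ⟨i, j, hij, rfl⟩
    exact ⟨(i, j), by simpa using hij, rfl⟩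
  · rintro ⟨⟨i, j⟩, hp, rfl⟩
    exact ⟨i, j, by simpa using hp, rfl⟩

theorem continuousOn_xi19 {m : ℕ} (hm : 2 ≤ m) {b : Fin m → Fin m → ℝ → ℝ} {s : Set ℝ}
    (hb : ∀ i j, ContinuousOn (b i j) s) : ContinuousOn (xi19 m b) s := by
  have hP : (univ.filter fun p : Fin m × Fin m => p.1 ≠ p.2).Nonempty :=
    ⟨(⟨0, by omega⟩, ⟨1, by omega⟩), by simp [Fin.ext_iff]⟩
  refine ContinuousOn.congr ?_ fun t _ => xi19_eq_neg_inf' b t hP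
  refine (ContinuousOn.finset_inf'_apply hP fun p _ => ?_).neg
  exact ((hb _ _).add (hb _ _)).add (continuousOn_finsetSum _ fun k _ => (hb _ _).inf (hb _ _))

theorem consensusField_sub_le_xi19_mul {m : ℕ} [NeZero m] (b : Fin m → Fin m → ℝ → ℝ) (t : ℝ)
    {v : Fin m → ℝ} {i j : Fin m}
    (hsup : v i - v j = univ.sup' univ_nonempty fun p : Fin m × Fin m => v p.1 - v p.2) :
    consensusField (fun i j => b i j t) v i - consensusField (fun i j => b i j t) v j ≤
      xi19 m b t * (v i - v j) := by
  rcases eq_or_ne i j with rfl | hij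
  · simp
  have hle : ∀ k l, v k - v l ≤ v i - v j := fun k l =>
    hsup ▸ le_sup' (fun p : Fin m × Fin m => v p.1 - v p.2) (mem_univ (k, l))
  have hmin : ∀ k, v j ≤ v k := fun k => by linarith [hle i k]
  have hmax : ∀ k, v k ≤ v i := fun k => by linarith [hle k j]
  calc _ ≤ -pairCoeff (fun i j => b i j t) i j * (v i - v j) :=
        consensusField_sub_le _ hij hmin hmax
    _ ≤ xi19 m b t * (v i - v j) :=
        mul_le_mul_of_nonneg_right (neg_pairCoeff_le_xi19 b t hij) (sub_nonneg.2 (hmax j))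

theorem stmt19
    (m : ℕ) (hm : 2 ≤ m)
    (b : Fin m → Fin m → ℝ → ℝ)
    (hbc : ∀ i j, ContinuousOn (b i j) (Set.Ici 0))
    (δ : ℝ → Fin m → ℝ)
    (hδ : ∀ (i : Fin m) (t : ℝ), 0 ≤ t →
      HasDerivAt (fun s => δ s i)
        (∑ j ∈ Finset.univ.filter (fun j => j ≠ i),
          b i j t * (δ t j - δ t i)) t) :
    ∀ t, 0 ≤ t →
      Vdiam m (δ t) ≤
        Real.exp (∫ s in (0:ℝ)..t, xi19 m b s) * Vdiam m (δ 0) := by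
  intro t ht
  have : NeZero m := ⟨by omega⟩
  simp only [Vdiam, ciSup_sub_ciInf_eq_sup']
  have hδc : ∀ i, ContinuousOn (fun s => δ s i) (Icc 0 t) := fun i s hs =>
    (hδ i s hs.1).continuousAt.continuousWithinAt
  refine le_exp_integral_mul_of_frequently_slope_lt ht
    (ContinuousOn.finset_sup'_apply (univ_nonempty (α := Fin m × Fin m)) fun p _ =>
      (hδc p.1).sub (hδc p.2))
    ((continuousOn_xi19 hm hbc).mono Icc_subset_Ici_self) fun x hx r hr => ?_
  refine frequently_slope_finset_sup'_lt (g := fun (p : Fin m × Fin m) s => δ s p.1 - δ s p.2) _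
    (fun p _ => (hδ p.1 x hx.1).sub (hδ p.2 x hx.1)) ?_
  rintro ⟨i, j⟩ - hij
  exact (consensusField_sub_le_xi19_mul b x hij).trans_lt (hij ▸ hr)
end
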